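/- arXiv:2111.09250 — 7 statements merged into one kernel-verified Lean document; each statement's English description precedes it below -/
import Mathlib

section
/- Let X be the random variable that takes value √((1-p)/p) with probability p and -√(p/(1-p)) with probability 1-p, where 0 < p ≤ 1/2. Then for every integer k ≥ 1, |E[X^k]| ≤ (√((1-p)/p))^{k-2}. -/
/-! Since `E[X] = 0` the case `k = 1` is trivial. For `k ≥ 2`, `|X| ≤ √((1-p)/p)` because
`p ≤ 1/2`, so `|E[X^k]| ≤ E[|X|^(k-2) X^2] ≤ √((1-p)/p)^(k-2) E[X^2] = √((1-p)/p)^(k-2)`. -/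

open Finset

theorem abs_sum_mul_pow_add_two_le {ι : Type*} (s : Finset ι) (w x : ι → ℝ) {M : ℝ}
    (hw : ∀ i ∈ s, 0 ≤ w i) (hx : ∀ i ∈ s, |x i| ≤ M) (m : ℕ) :
    |∑ i ∈ s, w i * x i ^ (m + 2)| ≤ M ^ m * ∑ i ∈ s, w i * x i ^ 2 := by
  rw [mul_sum]
  refine (abs_sum_le_sum_abs _ _).trans (sum_le_sum fun i hi => ?_)
  have hxm : |x i| ^ m ≤ M ^ m := pow_le_pow_left₀ (abs_nonneg _) (hx i hi) m
  calc |w i * x i ^ (m + 2)| = w i * x i ^ 2 * |x i| ^ m := by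
        rw [abs_mul, abs_of_nonneg (hw i hi), pow_add, abs_mul, abs_pow, abs_sq]; ring
    _ ≤ w i * x i ^ 2 * M ^ m := by gcongr; exact mul_nonneg (hw i hi) (sq_nonneg _)
    _ = M ^ m * (w i * x i ^ 2) := by ring

theorem mul_sqrt_div_comm {x y : ℝ} (hx : 0 ≤ x) (hy : 0 ≤ y) :
    x * √(y / x) = y * √(x / y) := by
  rcases hx.eq_or_lt with rfl | hx
  · simp
  rcases hy.eq_or_lt with rfl | hy
  · simp
  rw [← Real.sqrt_sq hx.le, ← Real.sqrt_mul (sq_nonneg _), ← Real.sqrt_sq hy.le,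
    ← Real.sqrt_mul (sq_nonneg _), Real.sqrt_sq hx.le, Real.sqrt_sq hy.le]
  congr 1
  field_simp

theorem mul_sq_sqrt_div_add {x y : ℝ} (hx : 0 < x) (hy : 0 < y) :
    x * √(y / x) ^ 2 + y * √(x / y) ^ 2 = x + y := by
  rw [Real.sq_sqrt (by positivity), Real.sq_sqrt (by positivity)]
  field_simp
  ring

theorem stmt2 (p : ℝ) (hp0 : 0 < p) (hp : p ≤ 1 / 2) (k : ℕ) (hk : 1 ≤ k) :
    |p * Real.sqrt ((1 - p) / p) ^ k + (1 - p) * (-Real.sqrt (p / (1 - p))) ^ k|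
      ≤ Real.sqrt ((1 - p) / p) ^ ((k : ℤ) - 2) := by
  have hq : 0 < 1 - p := by linarith
  set a := √((1 - p) / p)
  set b := √(p / (1 - p))
  obtain rfl | ⟨m, rfl⟩ : k = 1 ∨ ∃ m, k = m + 2 := by
    rcases k with _ | _ | m <;> simp_all
  · have hmean : p * a + (1 - p) * -b = 0 := by
      rw [mul_neg, mul_sqrt_div_comm hp0.le hq.le, add_neg_cancel]
    rw [pow_one, pow_one, hmean, abs_zero]
    exact zpow_nonneg (Real.sqrt_nonneg _) _
  · have hba : b ≤ a := Real.sqrt_le_sqrt (by rw [div_le_div_iff₀ hq hp0]; nlinarith)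
    have hvar : p * a ^ 2 + (1 - p) * b ^ 2 = 1 := by
      rw [mul_sq_sqrt_div_add hp0 hq]; ring
    have hbound := abs_sum_mul_pow_add_two_le univ ![p, 1 - p] ![a, -b] (M := a)
      (by simp [Fin.forall_fin_two, hp0.le, hq.le])
      (by simp [Fin.forall_fin_two, a, b, abs_of_nonneg (Real.sqrt_nonneg _), hba]) m
    simpa [Fin.sum_univ_two, hvar] using hbound
end

section
/- Let p ∈ (0,1), E a finite set, and G : E → {0,1}. If at most k < |E| edges of E are present in G (i.e. |{e ∈ E : G(e)=1}| ≤ k), then χ_E(G) = (-1)^{|E|-k} · Σ_{E' ⊆ E, |E'| ≤ k} binom(|E|-1-|E'|, |E|-1-k) · (-√(p/(1-p)))^{|E|-|E'|} · χ_{E'}(G). -/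
/-!
Write `f = a + g` on `E`, where `g` vanishes outside a set `T` of at most `k` elements. Expanding
`∏_{E'} f = ∑_{S ⊆ E'} a ^ (|E'| - |S|) ∏_S g`, the coefficient of `a ^ (|E| - |S|) ∏_S g` on the
right-hand side is the sum of the weights of all `E'` with `S ⊆ E' ⊆ E`. For `|S| ≤ k` this sum is `1`
by the Chu–Vandermonde identity at a negative upper index, and for `|S| > k` the product `∏_S g`
vanishes, so both sides equal `∑_{S ⊆ E} a ^ (|E| - |S|) ∏_S g`. The character `χ_E(G)` is such a
product with `a = √(p / (1 - p))` and `T` the set of edges present in `G`.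
-/

noncomputable def chi (p : ℝ) : Fin 2 → ℝ := fun e =>
  if e = 0 then Real.sqrt (p / (1 - p)) else -Real.sqrt ((1 - p) / p)

open Finset

theorem sum_range_neg_one_pow_mul_choose_mul_choose {N K : ℕ} (hK : K < N) :
    ∑ i ∈ range (K + 1), (-1 : ℤ) ^ (K - i) * N.choose i * (N - 1 - i).choose (K - i) = 1 := by
  -- Chu–Vandermonde for `choose K K = ∑ choose N i * choose (K - N) (K - i)`, where `K - N < 0`.
  have h := Ring.add_choose_eq (r := (N : ℤ)) (s := -((N - K : ℕ) : ℤ)) K (Commute.all _ _)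
  rw [show (N : ℤ) + -((N - K : ℕ) : ℤ) = (K : ℤ) by push_cast [hK.le]; ring,
    Ring.choose_natCast, Nat.choose_self, Nat.cast_one,
    Nat.sum_antidiagonal_eq_sum_range_succ
      (fun i j => Ring.choose (N : ℤ) i * Ring.choose (-((N - K : ℕ) : ℤ)) j)] at h
  refine Eq.trans (sum_congr rfl fun i hi => ?_) h.symm
  have hiK : i ≤ K := Nat.lt_succ_iff.mp (mem_range.mp hi)
  rw [Ring.choose_neg, Ring.choose_natCast,
    show ((N - K : ℕ) : ℤ) + (K - i : ℕ) - 1 = ((N - 1 - i : ℕ) : ℤ) by push_cast [hK.le, hiK]; omega,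
    Ring.choose_natCast, Units.smul_def, Int.coe_negOnePow_natCast, smul_eq_mul]
  ring

def truncWeight (n k m : ℕ) : ℤ :=
  if m ≤ k then (-1) ^ (k - m) * (n - 1 - m).choose (k - m) else 0

theorem truncWeight_add {n k s : ℕ} (hs : s ≤ k) (i : ℕ) :
    truncWeight n k (s + i) = truncWeight (n - s) (k - s) i := by
  simp only [truncWeight, show s + i ≤ k ↔ i ≤ k - s by omega,
    show k - (s + i) = k - s - i by omega, show n - 1 - (s + i) = n - s - 1 - i by omega]

theorem sum_range_choose_mul_truncWeight {N K : ℕ} (hK : K < N) :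
    ∑ i ∈ range (N + 1), N.choose i * truncWeight N K i = 1 := by
  have hrange : {i ∈ range (N + 1) | i ≤ K} = range (K + 1) := by
    ext i
    simp only [mem_filter, mem_range]
    omega
  simp only [truncWeight, mul_ite, mul_zero]
  rw [← sum_filter, hrange]
  exact (sum_congr rfl fun i _ => by ring).trans (sum_range_neg_one_pow_mul_choose_mul_choose hK)

theorem Finset.sum_Icc_apply_card {α M : Type*} [DecidableEq α] [AddCommMonoid M]
    {s t : Finset α} (h : s ⊆ t) (f : ℕ → M) :
    ∑ u ∈ Icc s t, f #u = ∑ i ∈ range (#t - #s + 1), (#t - #s).choose i • f (#s + i) := by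
  have hdisj : ∀ u ∈ (t \ s).powerset, Disjoint s u := fun u hu =>
    disjoint_of_subset_right (mem_powerset.mp hu) disjoint_sdiff
  rw [Icc_eq_image_powerset h, sum_image, ← card_sdiff_of_subset h,
    ← sum_powerset_apply_card (fun j => f (#s + j))]
  · exact sum_congr rfl fun u hu => by rw [card_union_of_disjoint (hdisj u hu)]
  · intro u hu v hv huv
    rw [← union_sdiff_cancel_left (hdisj u hu), ← union_sdiff_cancel_left (hdisj v hv)]
    exact congrArg (· \ s) huv

theorem sum_Icc_truncWeight {ι : Type*} [DecidableEq ι] {S E : Finset ι} {k : ℕ} (hSE : S ⊆ E)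
    (hS : #S ≤ k) (hk : k < #E) :
    ∑ E' ∈ Icc S E, truncWeight #E k #E' = 1 := by
  rw [sum_Icc_apply_card hSE]
  simp only [truncWeight_add hS, nsmul_eq_mul]
  exact sum_range_choose_mul_truncWeight (by omega)

theorem prod_eq_sum_powerset_truncWeight {ι R : Type*} [CommRing R] (E T : Finset ι) (f : ι → R)
    (a : R) {k : ℕ} (hT : #T ≤ k) (hf : ∀ e ∈ E, e ∉ T → f e = a) (hk : k < #E) :
    ∏ e ∈ E, f e =
      ∑ E' ∈ E.powerset, (truncWeight #E k #E' : R) * a ^ (#E - #E') * ∏ e ∈ E', f e := by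
  classical
  set g : ι → R := fun e => f e - a
  have expand (t : Finset ι) :
      ∏ e ∈ t, f e = ∑ S ∈ t.powerset, a ^ (#t - #S) * ∏ e ∈ S, g e := by
    rw [show ∏ e ∈ t, f e = ∏ e ∈ t, (g e + a) by simp [g], prod_add]
    refine sum_congr rfl fun S hS => ?_
    rw [prod_const, card_sdiff_of_subset (mem_powerset.mp hS), mul_comm]
  have vanish (S : Finset ι) (hSE : S ⊆ E) (hkS : k < #S) : ∏ e ∈ S, g e = 0 := by
    obtain ⟨e, heS, heT⟩ := not_subset.mp fun hST => ((card_le_card hST).trans hT).not_gt hkS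
    exact prod_eq_zero heS (sub_eq_zero.mpr (hf e (hSE heS) heT))
  calc ∏ e ∈ E, f e = ∑ S ∈ E.powerset, a ^ (#E - #S) * ∏ e ∈ S, g e := expand E
    _ = ∑ S ∈ E.powerset, ∑ E' ∈ Icc S E,
          (truncWeight #E k #E' : R) * (a ^ (#E - #S) * ∏ e ∈ S, g e) := by
      refine sum_congr rfl fun S hS => ?_
      rw [← sum_mul]
      by_cases hkS : #S ≤ k
      · rw [← Int.cast_sum, sum_Icc_truncWeight (mem_powerset.mp hS) hkS hk, Int.cast_one, one_mul]
      · rw [vanish S (mem_powerset.mp hS) (not_le.mp hkS), mul_zero, mul_zero]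
    _ = ∑ E' ∈ E.powerset, ∑ S ∈ E'.powerset,
          (truncWeight #E k #E' : R) * (a ^ (#E - #S) * ∏ e ∈ S, g e) := by
      refine sum_comm' fun S E' => ?_
      simp only [mem_Icc, mem_powerset]
      exact ⟨fun ⟨_, h⟩ => h, fun h => ⟨h.1.trans h.2, h⟩⟩
    _ = _ := by
      refine sum_congr rfl fun E' hE' => ?_
      rw [expand E', mul_sum]
      refine sum_congr rfl fun S hS => ?_
      have hSE' := card_le_card (mem_powerset.mp hS)
      have hE'E := card_le_card (mem_powerset.mp hE')
      rw [show #E - #S = (#E - #E') + (#E' - #S) by omega, pow_add]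
      ring

theorem sum_powerset_truncWeight_eq {ι R : Type*} [CommRing R] (E : Finset ι)
    (P : Finset ι → R) (a : R) {k : ℕ} (hk : k < #E) :
    ∑ E' ∈ E.powerset, (truncWeight #E k #E' : R) * a ^ (#E - #E') * P E' =
      (-1) ^ (#E - k) * ∑ E' ∈ E.powerset.filter (fun E' => #E' ≤ k),
        ((#E - 1 - #E').choose (#E - 1 - k) : R) * (-a) ^ (#E - #E') * P E' := by
  rw [sum_filter, mul_sum]
  refine sum_congr rfl fun E' _ => ?_
  by_cases hE' : #E' ≤ k
  · have hsign : (-1 : R) ^ (#E - k) * (-1) ^ (#E - k) = 1 := by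
      rw [← mul_pow, neg_one_mul, neg_neg, one_pow]
    rw [truncWeight, if_pos hE', if_pos hE', neg_pow a,
      Nat.choose_symm_of_eq_add (show #E - 1 - #E' = (#E - 1 - k) + (k - #E') by omega),
      show #E - #E' = (#E - k) + (k - #E') by omega]
    push_cast
    linear_combination
      (-((-1) ^ (k - #E') * ((#E - 1 - #E').choose (k - #E') : R) * a ^ (#E - k + (k - #E')) *
        P E')) * hsign
  · rw [truncWeight, if_neg hE', if_neg hE']
    simp

theorem stmt5_general {ι : Type*} (p : ℝ)
    (E : Finset ι) (G : ι → Fin 2) (k : ℕ)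
    (hG : (E.filter (fun e => G e = 1)).card ≤ k) (hk : k < E.card) :
    ∏ e ∈ E, chi p (G e)
      = (-1 : ℝ) ^ (E.card - k) *
          ∑ E' ∈ E.powerset.filter (fun E' => E'.card ≤ k),
            ((E.card - 1 - E'.card).choose (E.card - 1 - k) : ℝ) *
              (-Real.sqrt (p / (1 - p))) ^ (E.card - E'.card) *
              ∏ e ∈ E', chi p (G e) := by
  rw [← sum_powerset_truncWeight_eq E _ _ hk]
  refine prod_eq_sum_powerset_truncWeight E _ (fun e => chi p (G e)) _ hG (fun e he heT => ?_) hk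
  have hGe : G e = 0 := by
    simp only [mem_filter, he, true_and] at heT
    omega
  simp [chi, hGe]

theorem stmt5 {ι : Type*} [DecidableEq ι] (p : ℝ) (hp0 : 0 < p) (hp1 : p < 1)
    (E : Finset ι) (G : ι → Fin 2) (k : ℕ)
    (hG : (E.filter (fun e => G e = 1)).card ≤ k) (hk : k < E.card) :
    ∏ e ∈ E, chi p (G e)
      = (-1 : ℝ) ^ (E.card - k) *
          ∑ E' ∈ E.powerset.filter (fun E' => E'.card ≤ k),
            ((E.card - 1 - E'.card).choose (E.card - 1 - k) : ℝ) *
              (-Real.sqrt (p / (1 - p))) ^ (E.card - E'.card) *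
              ∏ e ∈ E', chi p (G e) :=
  stmt5_general p E G k hG hk
end

section
/- Let p ∈ (0,1), E a nonempty finite set, and G : E → {0,1}. Then Σ_{∅ ≠ E' ⊆ E} (√(p/(1-p)))^{|E'|} χ_{E'}(G) equals the average over all linear orderings of E of Σ_{e∈E} √(p/(1-p)) · χ(G(e)) · ∏_{e' > e} (1/(1-p))·(1-G(e')), which equals Σ_{e∈E} √(p/(1-p)) χ(G(e)) · Σ_{E' ⊆ E∖{e}} [1/(|E|·binom(|E|-1,|E'|))] · (1/(1-p))^{|E'|} · ∏_{e'∈E'}(1-G(e')). -/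
open Finset

namespace Finset

variable {α : Type*} [DecidableEq α] {M : Type*} [AddCommMonoid M]

theorem sum_Icc_eq_sum_powerset_sdiff {s t : Finset α} (h : s ⊆ t) (f : Finset α → M) :
    ∑ u ∈ Icc s t, f u = ∑ u ∈ (t \ s).powerset, f (s ∪ u) := by
  rw [Icc_eq_image_powerset h, sum_image]
  intro u hu v hv huv
  have hus : Disjoint s u := disjoint_of_subset_right (mem_powerset.1 hu) disjoint_sdiff
  have hvs : Disjoint s v := disjoint_of_subset_right (mem_powerset.1 hv) disjoint_sdiff
  rw [← union_sdiff_cancel_left hus, ← union_sdiff_cancel_left hvs]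
  exact congrArg (· \ s) huv

theorem sum_powerset_sum_mem_eq_sum_sum_powerset_erase (s : Finset α)
    (f : α → Finset α → M) :
    ∑ t ∈ s.powerset, ∑ a ∈ t, f a t
      = ∑ a ∈ s, ∑ t ∈ (s.erase a).powerset, f a (insert a t) := by
  rw [sum_comm' (t' := s) (s' := fun a => Icc {a} s)
    (fun t a => by
      simp only [mem_powerset, mem_Icc, singleton_subset_iff]
      exact ⟨fun h => ⟨⟨h.2, h.1⟩, h.1 h.2⟩, fun h => ⟨h.1.2, h.1.1⟩⟩)]
  refine sum_congr rfl fun a ha => ?_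
  rw [sum_Icc_eq_sum_powerset_sdiff (singleton_subset_iff.2 ha), sdiff_singleton_eq_erase]
  rfl

end Finset

section

variable {K : Type*} [Field K] [CharZero K]

theorem sum_range_choose_div_choose (j r : ℕ) :
    ∑ t ∈ range (r + 1), (r.choose t : K) / ((j + r + 1) * (j + r).choose (j + t))
      = 1 / (j + 1) := by
  have hpos : ∀ {n k : ℕ}, k ≤ n → (n.choose k : K) ≠ 0 := fun h =>
    Nat.cast_ne_zero.2 (Nat.choose_pos h).ne'
  have hterm : ∀ t ∈ range (r + 1), (r.choose t : K) / ((j + r + 1) * (j + r).choose (j + t))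
      = ((t + j).choose j : K) / ((j + 1) * (j + r + 1).choose (j + 1)) := by
    intro t ht
    have htr : t ≤ r := Nat.lt_succ_iff.1 (mem_range.1 ht)
    have key : r.choose t * ((j + 1) * (j + r + 1).choose (j + 1))
        = (t + j).choose j * ((j + r + 1) * (j + r).choose (j + t)) := by
      have hmul := Nat.choose_mul (n := j + r) (k := j + t) (s := j) (Nat.le_add_right j t)
      rw [Nat.add_sub_cancel_left, Nat.add_sub_cancel_left] at hmul
      rw [mul_comm (j + 1), ← Nat.add_one_mul_choose_eq, add_comm t j]
      linear_combination (j + r + 1) * hmul.symm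
    rw [div_eq_div_iff (mul_ne_zero (by norm_cast) (hpos (by omega)))
      (mul_ne_zero (by norm_cast) (hpos (by omega)))]
    exact_mod_cast key
  rw [sum_congr rfl hterm, ← sum_div, ← Nat.cast_sum, Nat.sum_range_add_choose, add_comm r j]
  have := hpos (n := j + r + 1) (k := j + 1) (by omega)
  field_simp

theorem sum_Icc_one_div_card_add_one_mul_choose {ι : Type*} [DecidableEq ι] {S A : Finset ι}
    (h : S ⊆ A) :
    ∑ T ∈ Icc S A, 1 / (((#A : K) + 1) * (#A).choose #T) = 1 / ((#S : K) + 1) := by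
  have hcard : #A = #S + #(A \ S) := by rw [add_comm, card_sdiff_add_card_eq_card h]
  rw [sum_Icc_eq_sum_powerset_sdiff h]
  have hunion : ∀ U ∈ (A \ S).powerset, #(S ∪ U) = #S + #U := fun U hU =>
    card_union_of_disjoint (disjoint_of_subset_right (mem_powerset.1 hU) disjoint_sdiff)
  rw [sum_congr rfl fun U hU => by rw [hunion U hU],
    sum_powerset_apply_card (fun k => 1 / (((#A : K) + 1) * (#A).choose (#S + k))), hcard]
  simp only [nsmul_eq_mul, mul_one_div]
  push_cast
  exact sum_range_choose_div_choose _ _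

theorem sum_powerset_one_div_mul_choose_mul_prod_one_add {ι : Type*} [DecidableEq ι]
    (A : Finset ι) (a : ι → K) :
    ∑ T ∈ A.powerset, 1 / (((#A : K) + 1) * (#A).choose #T) * ∏ i ∈ T, (1 + a i)
      = ∑ S ∈ A.powerset, 1 / ((#S : K) + 1) * ∏ i ∈ S, a i := by
  simp_rw [prod_one_add, mul_sum]
  rw [sum_comm' (t' := A.powerset) (s' := fun S => Icc S A) (fun T S => by
    simp only [mem_powerset, mem_Icc]
    exact ⟨fun h => ⟨⟨h.2, h.1⟩, h.2.trans h.1⟩, fun h => ⟨h.1.2, h.1.1⟩⟩)]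
  refine sum_congr rfl fun S hS => ?_
  rw [← sum_mul, sum_Icc_one_div_card_add_one_mul_choose (mem_powerset.1 hS)]

theorem sum_mul_sum_powerset_erase_mul_prod_one_add {ι : Type*} [DecidableEq ι]
    (E : Finset ι) (a : ι → K) :
    ∑ e ∈ E, a e * ∑ T ∈ (E.erase e).powerset,
        1 / ((#E : K) * (#E - 1).choose #T) * ∏ i ∈ T, (1 + a i)
      = ∑ F ∈ E.powerset with F ≠ ∅, ∏ i ∈ F, a i := by
  calc _ = ∑ e ∈ E, ∑ S ∈ (E.erase e).powerset,
          1 / (#(insert e S) : K) * ∏ i ∈ insert e S, a i := by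
        refine sum_congr rfl fun e he => ?_
        have hcard : (#E : K) = #(E.erase e) + 1 := by exact_mod_cast (card_erase_add_one he).symm
        rw [hcard, ← card_erase_of_mem he, sum_powerset_one_div_mul_choose_mul_prod_one_add,
          mul_sum]
        refine sum_congr rfl fun S hS => ?_
        have heS : e ∉ S := fun h => notMem_erase e E (mem_powerset.1 hS h)
        rw [prod_insert heS, card_insert_of_notMem heS, Nat.cast_add_one]
        ring
    _ = ∑ F ∈ E.powerset, ∑ _e ∈ F, 1 / (#F : K) * ∏ i ∈ F, a i :=
        (sum_powerset_sum_mem_eq_sum_sum_powerset_erase E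
          fun _ F => 1 / (#F : K) * ∏ i ∈ F, a i).symm
    _ = _ := by
        rw [sum_filter]
        refine sum_congr rfl fun F _ => ?_
        rw [sum_const, nsmul_eq_mul]
        split_ifs with hF
        · have : (#F : K) ≠ 0 := Nat.cast_ne_zero.2 (card_ne_zero.2 (nonempty_iff_ne_empty.2 hF))
          field_simp
        · simp [not_not.1 hF]

end

theorem one_add_sqrt_mul_chi {p : ℝ} (hp0 : 0 < p) (hp1 : p < 1) (x : Fin 2) :
    1 + Real.sqrt (p / (1 - p)) * chi p x = 1 / (1 - p) * (1 - (x.val : ℝ)) := by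
  have h1p : 1 - p ≠ 0 := by linarith
  have hpos : 0 ≤ p / (1 - p) := (div_pos hp0 (sub_pos.2 hp1)).le
  fin_cases x
  · have hchi : chi p 0 = Real.sqrt (p / (1 - p)) := if_pos rfl
    simp only [Fin.zero_eta, hchi, Real.mul_self_sqrt hpos, Nat.cast_zero]
    field_simp
    ring
  · have : Real.sqrt (p / (1 - p)) * Real.sqrt ((1 - p) / p) = 1 := by
      rw [← Real.sqrt_mul hpos, div_mul_div_comm, mul_comm p,
        div_self (mul_ne_zero h1p hp0.ne'), Real.sqrt_one]
    simp [chi, this]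

theorem stmt7_general {ι : Type*} [DecidableEq ι] (p : ℝ) (hp0 : 0 < p) (hp1 : p < 1)
    (E : Finset ι) (G : ι → Fin 2) :
    ∑ E' ∈ E.powerset.filter (fun E' => E' ≠ ∅),
        Real.sqrt (p / (1 - p)) ^ E'.card * ∏ e ∈ E', chi p (G e)
      = ∑ e ∈ E, Real.sqrt (p / (1 - p)) * chi p (G e) *
          ∑ E' ∈ (E.erase e).powerset,
            (1 / ((E.card : ℝ) * ((E.card - 1).choose E'.card))) *
              (1 / (1 - p)) ^ E'.card * ∏ e' ∈ E', (1 - ((G e').val : ℝ)) := by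
  set a : ι → ℝ := fun i => Real.sqrt (p / (1 - p)) * chi p (G i)
  have hweight : ∀ T : Finset ι, (1 / (1 - p)) ^ #T * ∏ i ∈ T, (1 - ((G i).val : ℝ))
      = ∏ i ∈ T, (1 + a i) := fun T => by
    simp only [a, one_add_sqrt_mul_chi hp0 hp1, prod_mul_distrib, prod_const]
  have hmonomial : ∀ F : Finset ι,
      Real.sqrt (p / (1 - p)) ^ #F * ∏ i ∈ F, chi p (G i) = ∏ i ∈ F, a i := fun F => by
    simp only [a, prod_mul_distrib, prod_const]
  simp only [mul_assoc _ ((1 / (1 - p)) ^ _), hweight, hmonomial]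
  exact (sum_mul_sum_powerset_erase_mul_prod_one_add E a).symm

theorem stmt7 {ι : Type*} [DecidableEq ι] (p : ℝ) (hp0 : 0 < p) (hp1 : p < 1)
    (E : Finset ι) (hE : E.Nonempty) (G : ι → Fin 2) :
    ∑ E' ∈ E.powerset.filter (fun E' => E' ≠ ∅),
        Real.sqrt (p / (1 - p)) ^ E'.card * ∏ e ∈ E', chi p (G e)
      = ∑ e ∈ E, Real.sqrt (p / (1 - p)) * chi p (G e) *
          ∑ E' ∈ (E.erase e).powerset,
            (1 / ((E.card : ℝ) * ((E.card - 1).choose E'.card))) *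
              (1 / (1 - p)) ^ E'.card * ∏ e' ∈ E', (1 - ((G e').val : ℝ)) :=
  stmt7_general p hp0 hp1 E G
end

section
/- Let τ be a finite graph with distinguished subsets U_τ, V_τ of its vertices such that U_τ and V_τ are both minimum vertex separators between U_τ and V_τ (i.e. τ is a middle shape), and such that every vertex of τ has a path to U_τ ∪ V_τ. Then for any vertex separator S of τ (between U_τ and V_τ), every vertex of τ is connected to S, and consequently |E(τ) ∖ E(S)| ≥ |V(τ) ∖ S|, where E(S) is the set of edges with both endpoints in S. -/
/-- `S` is a vertex separator between `A` and `B` in `G`: every walk from a vertex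
of `A` to a vertex of `B` passes through a vertex of `S`. -/
def IsSeparator {V : Type*} (G : SimpleGraph V) (A B S : Set V) : Prop :=
  ∀ a ∈ A, ∀ b ∈ B, ∀ w : G.Walk a b, ∃ x ∈ w.support, x ∈ S

theorem stmt10 {V : Type*} [Fintype V] (τ : SimpleGraph V) (U W S : Set V)
    (hUsep : IsSeparator τ U W U) (hWsep : IsSeparator τ U W W)
    (hUmin : ∀ T : Set V, IsSeparator τ U W T → U.ncard ≤ T.ncard)
    (hWmin : ∀ T : Set V, IsSeparator τ U W T → W.ncard ≤ T.ncard)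
    (hreach : ∀ v : V, ∃ u ∈ U ∪ W, τ.Reachable v u)
    (hS : IsSeparator τ U W S) :
    (∀ v : V, ∃ s ∈ S, τ.Reachable v s) ∧
      Set.ncard {v : V | v ∉ S} ≤ Set.ncard {e ∈ τ.edgeSet | ¬∀ x ∈ e, x ∈ S} := by
  classical
  -- Step 1: every vertex of U reaches S
  have hU : ∀ u ∈ U, ∃ s ∈ S, τ.Reachable u s := by
    intro u hu
    by_contra hnot
    push_neg at hnot
    have hnoW : ∀ b ∈ W, ¬ τ.Reachable u b := by
      rintro b hb ⟨p⟩
      obtain ⟨x, hx, hxS⟩ := hS u hu b hb p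
      exact hnot x hxS ⟨p.takeUntil x hx⟩
    have hT : IsSeparator τ U W (U \ {u}) := by
      intro a ha b hb p
      obtain ⟨x, hx, hxU⟩ := hUsep a ha b hb p
      by_cases hxu : x = u
      · subst hxu
        exact absurd ⟨p.dropUntil x hx⟩ (hnoW b hb)
      · exact ⟨x, hx, hxU, by simp [hxu]⟩
    have h1 := hUmin _ hT
    have h2 := Set.ncard_diff_singleton_lt_of_mem hu (Set.toFinite U)
    omega
  -- Step 1': every vertex of W reaches S
  have hW : ∀ b ∈ W, ∃ s ∈ S, τ.Reachable b s := by
    intro w hw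
    by_contra hnot
    push_neg at hnot
    have hnoU : ∀ a ∈ U, ¬ τ.Reachable a w := by
      rintro a ha ⟨p⟩
      obtain ⟨x, hx, hxS⟩ := hS a ha w hw p
      exact hnot x hxS ((p.dropUntil x hx).reverse.reachable)
    have hT : IsSeparator τ U W (W \ {w}) := by
      intro a ha b hb p
      obtain ⟨x, hx, hxW⟩ := hWsep a ha b hb p
      by_cases hxw : x = w
      · subst hxw
        exact absurd ⟨p.takeUntil x hx⟩ (hnoU a ha)
      · exact ⟨x, hx, hxW, by simp [hxw]⟩
    have h1 := hWmin _ hT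
    have h2 := Set.ncard_diff_singleton_lt_of_mem hw (Set.toFinite W)
    omega
  have hreachS : ∀ v : V, ∃ s ∈ S, τ.Reachable v s := by
    intro v
    obtain ⟨u, hu, hvu⟩ := hreach v
    rcases hu with hu | hu
    · obtain ⟨s, hs, hus⟩ := hU u hu
      exact ⟨s, hs, hvu.trans hus⟩
    · obtain ⟨s, hs, hus⟩ := hW u hu
      exact ⟨s, hs, hvu.trans hus⟩
  refine ⟨hreachS, ?_⟩
  -- Step 2: the injection
  have hex : ∀ v : V, ∃ n, ∃ s, s ∈ S ∧ ∃ p : τ.Walk v s, p.length = n := by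
    intro v
    obtain ⟨s, hs, ⟨p⟩⟩ := hreachS v
    exact ⟨p.length, s, hs, p, rfl⟩
  have key : ∀ v, v ∉ S → ∃ u, τ.Adj v u ∧ Nat.find (hex u) < Nat.find (hex v) := by
    intro v hv
    obtain ⟨s, hs, p, hp⟩ := Nat.find_spec (hex v)
    cases p with
    | nil => exact absurd hs (by simpa using hv)
    | @cons _ u _ h q =>
      refine ⟨u, h, ?_⟩
      have h1 : Nat.find (hex u) ≤ q.length := Nat.find_le ⟨s, hs, q, rfl⟩
      have h2 : q.length + 1 = Nat.find (hex v) := by simpa using hp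
      omega
  choose w hadj hlt using key
  set f : V → Sym2 V := fun v => if hv : v ∈ S then s(v, v) else s(v, w v hv) with hf
  apply Set.ncard_le_ncard_of_injOn f
  · intro v hv
    simp only [Set.mem_setOf_eq] at hv
    refine ⟨?_, ?_⟩
    · simp only [hf, dif_neg hv]
      exact hadj v hv
    · simp only [hf, dif_neg hv]
      push_neg
      exact ⟨v, Sym2.mem_mk_left _ _, hv⟩
  · intro a ha b hb hab
    simp only [Set.mem_setOf_eq] at ha hb
    simp only [hf, dif_neg ha, dif_neg hb, Sym2.eq_iff] at hab
    rcases hab with ⟨h1, _⟩ | ⟨h1, h2⟩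
    · exact h1
    · exfalso
      have l1 := hlt a ha
      have l2 := hlt b hb
      rw [h2] at l1
      rw [← h1] at l2
      omega
end

section
/- Fix constants η > 0 and p ≤ 1/2, d = pn. With probability at least 1 - O(n^{-η}) over G ~ G(n,p), every subgraph S of G with |V(S)| ≤ (n/d)^{1/3} satisfies |E(S)| ≤ 3|V(S)|·log_{1/p}(n) + 3η·log_{1/p}(n). -/
open MeasureTheory

/-- The Bernoulli(p) measure on `Bool` (with `p` clamped into `[0,1]`). -/
noncomputable def bern (p : ℝ) : Measure Bool :=
  (PMF.bernoulli (min (Real.toNNReal p) 1) (min_le_right _ _)).toMeasure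

/-- The Erdős–Rényi measure `G(n,p)`: each non-diagonal pair is an edge
independently with probability `p`. -/
noncomputable def ERMeasure (n : ℕ) (p : ℝ) :
    Measure ({e : Sym2 (Fin n) // ¬e.IsDiag} → Bool) :=
  Measure.pi fun _ => bern p

/-- Number of edges of the graph `ω` induced on the vertex set `A`. -/
noncomputable def inducedEdgeCount (n : ℕ) (ω : {e : Sym2 (Fin n) // ¬e.IsDiag} → Bool)
    (A : Finset (Fin n)) : ℕ :=
  Set.ncard {e : {e : Sym2 (Fin n) // ¬e.IsDiag} | ω e = true ∧ ∀ x ∈ e.1, x ∈ A}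

/-! For a fixed vertex set `A` of size `a ≤ p^(-1/3)`, having at least `k` edges inside `A` means
that some `k` of its at most `a²` pairs are all present, which has probability at most
`C(a², k) p^k ≤ (a² p)^k ≤ p^(k/3)`. Past the threshold `k > 3 (a + η) log_{1/p} n` this is at most
`n^(-(a + η))`, and the union bound over all `A` costs
`∑_A n^(-(|A| + η)) = n^(-η) (1 + 1/n)^n ≤ e n^(-η)`. -/

open Finset

section Bernoulli

variable {ι : Type*} [Fintype ι] {p : ℝ}

instance : IsProbabilityMeasure (bern p) :=
  PMF.toMeasure.isProbabilityMeasure _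

lemma bern_singleton_true (hp : p ≤ 1) : bern p {true} = ENNReal.ofReal p := by
  rw [bern, PMF.toMeasure_apply_singleton _ _ (measurableSet_singleton _)]
  simp [PMF.bernoulli_apply, ENNReal.ofReal, min_eq_left (Real.toNNReal_le_one.2 hp)]

lemma pi_bern_forall_eq_true (hp : p ≤ 1) (s : Finset ι) :
    Measure.pi (fun _ : ι => bern p) {ω | ∀ i ∈ s, ω i = true} = ENNReal.ofReal p ^ #s := by
  have hset : {ω : ι → Bool | ∀ i ∈ s, ω i = true} = (s : Set ι).pi fun _ => {true} := by
    ext ω; simp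
  rw [hset, Measure.pi_pi_finset, bern_singleton_true hp, prod_const]

lemma pi_bern_le_card_filter_eq_true (hp : p ≤ 1) (s : Finset ι) (k : ℕ) :
    Measure.pi (fun _ : ι => bern p) {ω | k ≤ #{i ∈ s | ω i = true}}
      ≤ (#s).choose k * ENNReal.ofReal p ^ k := by
  have hcover : {ω : ι → Bool | k ≤ #{i ∈ s | ω i = true}}
      ⊆ ⋃ t ∈ s.powersetCard k, {ω | ∀ i ∈ t, ω i = true} := by
    intro ω hω
    obtain ⟨t, hts, rfl⟩ := exists_subset_card_eq hω
    refine Set.mem_iUnion₂.2 ⟨t, mem_powersetCard.2 ⟨hts.trans (filter_subset _ _), rfl⟩, ?_⟩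
    exact fun i hi => (mem_filter.1 (hts hi)).2
  calc _ ≤ ∑ t ∈ s.powersetCard k, Measure.pi (fun _ : ι => bern p) {ω | ∀ i ∈ t, ω i = true} :=
        (measure_mono hcover).trans (measure_biUnion_finset_le _ _)
    _ = (#s).choose k * ENNReal.ofReal p ^ k := by
        rw [sum_congr rfl fun t ht => by rw [pi_bern_forall_eq_true hp, (mem_powersetCard.1 ht).2],
          sum_const, card_powersetCard, nsmul_eq_mul]

end Bernoulli

section Pairs

variable {V : Type*} [Fintype V] [DecidableEq V]

def pairsWithin (A : Finset V) : Finset {e : Sym2 V // ¬e.IsDiag} :=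
  {e | e.1 ∈ A.sym2}

lemma card_pairsWithin_le (A : Finset V) : #(pairsWithin A) ≤ #A ^ 2 := by
  have hsym2 : #(pairsWithin A) ≤ #A.sym2 :=
    card_le_card_of_injOn Subtype.val (fun e he => (mem_filter.1 he).2)
      Subtype.val_injective.injOn
  have hchoose : (#A + 1).choose 2 ≤ #A ^ 2 := by
    rw [Nat.choose_two_right]
    exact Nat.div_le_of_le_mul (by rw [Nat.add_sub_cancel]; nlinarith)
  exact hsym2.trans ((card_sym2 A).trans_le hchoose)

end Pairs

lemma inducedEdgeCount_eq_card_filter {n : ℕ} (ω : {e : Sym2 (Fin n) // ¬e.IsDiag} → Bool)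
    (A : Finset (Fin n)) : inducedEdgeCount n ω A = #{e ∈ pairsWithin A | ω e = true} := by
  rw [inducedEdgeCount, ← Set.ncard_coe_finset]
  congr 1
  ext e
  simp [pairsWithin, mem_sym2_iff, and_comm]

section Estimates

open Real

lemma rpow_logb_one_div {p x : ℝ} (hp0 : 0 < p) (hp1 : p < 1) (hx : 0 < x) :
    p ^ logb (1 / p) x = x⁻¹ := by
  have hb : 1 / p ≠ 1 := (one_lt_one_div hp0 hp1).ne'
  calc p ^ logb (1 / p) x = ((1 / p) ^ logb (1 / p) x)⁻¹ := by
        rw [← inv_rpow (by positivity), one_div, inv_inv]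
    _ = x⁻¹ := by rw [rpow_logb (by positivity) hb hx]

lemma sq_mul_le_rpow_one_third {p a : ℝ} (hp0 : 0 < p) (ha0 : 0 ≤ a)
    (ha : a ≤ (1 / p) ^ ((1 : ℝ) / 3)) : a ^ 2 * p ≤ p ^ ((1 : ℝ) / 3) := by
  set q := p ^ ((1 : ℝ) / 3)
  have hq : 0 < q := by positivity
  have hcube : p = q ^ 3 := by
    rw [← rpow_natCast, ← rpow_mul hp0.le]; norm_num
  have haq : a * q ≤ 1 := by
    rwa [div_rpow zero_le_one hp0.le, one_rpow, le_div_iff₀ hq] at ha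
  rw [hcube]
  nlinarith [mul_nonneg ha0 hq.le, mul_le_mul_of_nonneg_left haq (mul_nonneg ha0 hq.le)]

lemma choose_mul_pow_le_inv_rpow {p x η : ℝ} (hp0 : 0 < p) (hp1 : p < 1) (hx : 0 < x)
    {a N k : ℕ} (hN : N ≤ a ^ 2) (ha : (a : ℝ) ≤ (1 / p) ^ ((1 : ℝ) / 3))
    (hk : 3 * a * logb (1 / p) x + 3 * η * logb (1 / p) x ≤ k) :
    (N.choose k : ℝ) * p ^ k ≤ x⁻¹ ^ ((a : ℝ) + η) := by
  set q := p ^ ((1 : ℝ) / 3)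
  have hq1 : q ≤ 1 := rpow_le_one hp0.le hp1.le (by norm_num)
  calc (N.choose k : ℝ) * p ^ k ≤ ((a : ℝ) ^ 2 * p) ^ k := by
        rw [mul_pow]
        gcongr
        exact_mod_cast (N.choose_le_pow k).trans (Nat.pow_le_pow_left hN k)
    _ ≤ q ^ (k : ℝ) := by
        rw [rpow_natCast]
        gcongr
        exact sq_mul_le_rpow_one_third hp0 (Nat.cast_nonneg a) ha
    _ ≤ q ^ (3 * ((a + η) * logb (1 / p) x)) :=
        rpow_le_rpow_of_exponent_ge (by positivity) hq1 (by linarith)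
    _ = x⁻¹ ^ ((a : ℝ) + η) := by
        rw [← rpow_mul hp0.le, ← mul_assoc, one_div_mul_cancel three_ne_zero, one_mul,
          mul_comm, rpow_mul hp0.le, rpow_logb_one_div hp0 hp1 hx]

lemma sum_inv_rpow_card_add_le {n : ℕ} (hn : 0 < n) (η : ℝ) :
    ∑ A : Finset (Fin n), (n : ℝ)⁻¹ ^ ((#A : ℝ) + η) ≤ exp 1 * (n : ℝ) ^ (-η) := by
  have hn' : (0 : ℝ) < n := by exact_mod_cast hn
  have hsplit : ∀ A : Finset (Fin n),
      (n : ℝ)⁻¹ ^ ((#A : ℝ) + η) = (n : ℝ) ^ (-η) * ((n : ℝ)⁻¹ ^ #A * 1 ^ (n - #A)) := by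
    intro A
    rw [rpow_add (by positivity), rpow_natCast, inv_rpow hn'.le, ← rpow_neg hn'.le, one_pow,
      mul_one, mul_comm]
  calc ∑ A : Finset (Fin n), (n : ℝ)⁻¹ ^ ((#A : ℝ) + η)
      = (n : ℝ) ^ (-η) * ((n : ℝ)⁻¹ + 1) ^ n := by
        simp_rw [hsplit, ← mul_sum, Fin.sum_pow_mul_eq_add_pow]
    _ ≤ (n : ℝ) ^ (-η) * exp ((n : ℝ)⁻¹) ^ n := by
        gcongr
        exact add_one_le_exp _
    _ = exp 1 * (n : ℝ) ^ (-η) := by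
        rw [← exp_nat_mul, mul_inv_cancel₀ hn'.ne', mul_comm]

end Estimates

section ErdosRenyi

variable {n : ℕ} {p : ℝ}

instance : IsProbabilityMeasure (ERMeasure n p) :=
  Measure.pi.instIsProbabilityMeasure _

lemma ERMeasure_lt_inducedEdgeCount_le {η : ℝ} (hn : 0 < n) (hp0 : 0 < p) (hp1 : p < 1)
    (hη : 0 ≤ η) {A : Finset (Fin n)} (hA : (#A : ℝ) ≤ (1 / p) ^ ((1 : ℝ) / 3)) :
    ERMeasure n p {ω | 3 * #A * Real.logb (1 / p) n + 3 * η * Real.logb (1 / p) n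
        < inducedEdgeCount n ω A}
      ≤ ENNReal.ofReal ((n : ℝ)⁻¹ ^ ((#A : ℝ) + η)) := by
  set T := 3 * #A * Real.logb (1 / p) n + 3 * η * Real.logb (1 / p) n
  have hT : 0 ≤ T := by
    have : 0 ≤ Real.logb (1 / p) n :=
      Real.logb_nonneg (one_lt_one_div hp0 hp1) (by exact_mod_cast hn)
    positivity
  have hthreshold : {ω | T < inducedEdgeCount n ω A}
      = {ω | ⌊T⌋₊ + 1 ≤ #{e ∈ pairsWithin A | ω e = true}} := by
    ext ω
    simp only [Set.mem_ofPred_eq, inducedEdgeCount_eq_card_filter, Nat.add_one_le_iff,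
      Nat.floor_lt hT]
  rw [hthreshold]
  calc _ ≤ (#(pairsWithin A)).choose (⌊T⌋₊ + 1) * ENNReal.ofReal p ^ (⌊T⌋₊ + 1) :=
        pi_bern_le_card_filter_eq_true hp1.le _ _
    _ = ENNReal.ofReal ((#(pairsWithin A)).choose (⌊T⌋₊ + 1) * p ^ (⌊T⌋₊ + 1)) := by
        rw [ENNReal.ofReal_mul (by positivity), ENNReal.ofReal_natCast, ENNReal.ofReal_pow hp0.le]
    _ ≤ _ := by
        refine ENNReal.ofReal_le_ofReal (choose_mul_pow_le_inv_rpow hp0 hp1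
          (by exact_mod_cast hn) (card_pairsWithin_le A) hA ?_)
        push_cast
        exact (Nat.lt_floor_add_one T).le

lemma ERMeasure_exists_dense_small_le {η : ℝ} (hn : 0 < n) (hp0 : 0 < p) (hp1 : p < 1)
    (hη : 0 ≤ η) :
    ERMeasure n p {ω | ∃ A : Finset (Fin n), (#A : ℝ) ≤ (1 / p) ^ ((1 : ℝ) / 3) ∧
        3 * #A * Real.logb (1 / p) n + 3 * η * Real.logb (1 / p) n < inducedEdgeCount n ω A}
      ≤ ENNReal.ofReal (Real.exp 1 * (n : ℝ) ^ (-η)) := by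
  set Small : Finset (Finset (Fin n)) := {A | (#A : ℝ) ≤ (1 / p) ^ ((1 : ℝ) / 3)}
  calc _ ≤ ∑ A ∈ Small, ERMeasure n p {ω | 3 * #A * Real.logb (1 / p) n
          + 3 * η * Real.logb (1 / p) n < inducedEdgeCount n ω A} := by
        refine (measure_mono ?_).trans (measure_biUnion_finset_le _ _)
        rintro ω ⟨A, hA, hlt⟩
        exact Set.mem_iUnion₂.2 ⟨A, mem_filter.2 ⟨mem_univ A, hA⟩, hlt⟩
    _ ≤ ∑ A ∈ Small, ENNReal.ofReal ((n : ℝ)⁻¹ ^ ((#A : ℝ) + η)) :=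
        sum_le_sum fun A hA => ERMeasure_lt_inducedEdgeCount_le hn hp0 hp1 hη (mem_filter.1 hA).2
    _ ≤ ENNReal.ofReal (∑ A : Finset (Fin n), (n : ℝ)⁻¹ ^ ((#A : ℝ) + η)) := by
        rw [ENNReal.ofReal_sum_of_nonneg fun A _ => by positivity]
        exact sum_le_sum_of_subset (subset_univ Small)
    _ ≤ _ := ENNReal.ofReal_le_ofReal (sum_inv_rpow_card_add_le hn η)

end ErdosRenyi

theorem stmt11 (η : ℝ) (hη : 0 < η) :
    ∃ C : ℝ, 0 < C ∧ ∀ n : ℕ, 1 ≤ n → ∀ p : ℝ, 0 < p → p ≤ 1 / 2 →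
      ERMeasure n p {ω | ∀ A : Finset (Fin n),
          (A.card : ℝ) ≤ ((n : ℝ) / (p * n)) ^ ((1 : ℝ) / 3) →
          (inducedEdgeCount n ω A : ℝ)
            ≤ 3 * A.card * Real.logb (1 / p) n + 3 * η * Real.logb (1 / p) n}
        ≥ 1 - ENNReal.ofReal (C * (n : ℝ) ^ (-η)) := by
  refine ⟨Real.exp 1, Real.exp_pos 1, fun n hn p hp0 hp => ?_⟩
  have hp1 : p < 1 := hp.trans_lt (by norm_num)
  rw [show (n : ℝ) / (p * n) = 1 / p by field_simp]
  set Good := {ω | ∀ A : Finset (Fin n), (#A : ℝ) ≤ (1 / p) ^ ((1 : ℝ) / 3) →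
    (inducedEdgeCount n ω A : ℝ) ≤ 3 * #A * Real.logb (1 / p) n + 3 * η * Real.logb (1 / p) n}
  have hbad : ERMeasure n p Goodᶜ ≤ ENNReal.ofReal (Real.exp 1 * (n : ℝ) ^ (-η)) := by
    refine (measure_mono fun ω hω => ?_).trans (ERMeasure_exists_dense_small_le hn hp0 hp1 hη.le)
    simpa [Good] using hω
  rw [ge_iff_le, tsub_le_iff_right]
  calc 1 = ERMeasure n p Set.univ := measure_univ.symm
    _ ≤ ERMeasure n p Good + ERMeasure n p Goodᶜ := measure_univ_le_add_compl Good
    _ ≤ _ := by gcongr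
end

section
/- Let the planted distribution be: sample G ~ G(n,p), sample S ⊆ [n] including each vertex independently with probability k/n, and remove all edges inside S to get G̃. For any T ⊆ [n] and any finite graph α with vertex set V(α) ⊆ [n] and edge set E(α) ⊆ binom([n],2), letting x_T(S) = 1 if T ⊆ S and 0 otherwise, E[x_T(S) · χ_{E(α)}(G̃)] = (k/n)^{|V(α) ∪ T|} · (p/(1-p))^{|E(α)|/2}, where χ_{E(α)}(G̃) = ∏_{e ∈ E(α)} χ(G̃_e) with the p-biased characters χ(0) = √(p/(1-p)), χ(1) = -√((1-p)/p). -/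
open MeasureTheory

/-- The planted distribution: an Erdős–Rényi graph `G(n,p)` together with an
independent random vertex subset `S` containing each vertex with probability `κ`. -/
noncomputable def PlantedMeasure (n : ℕ) (p κ : ℝ) :
    Measure ((Sym2 (Fin n) → Bool) × (Fin n → Bool)) :=
  (Measure.pi fun _ : Sym2 (Fin n) => bern p).prod (Measure.pi fun _ : Fin n => bern κ)

/-- The p-biased character: `χ(0) = √(p/(1-p))`, `χ(1) = -√((1-p)/p)`. -/
noncomputable def chiB (p : ℝ) : Bool → ℝ := fun b =>
  if b then -Real.sqrt ((1 - p) / p) else Real.sqrt (p / (1 - p))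

open Classical in
/-- `χ(G̃_e)`: the p-biased character of the edge `e` in the graph `ω.1` with all
edges inside the planted set `ω.2` removed. -/
noncomputable def tildeChi (n : ℕ) (p : ℝ)
    (ω : (Sym2 (Fin n) → Bool) × (Fin n → Bool)) (e : Sym2 (Fin n)) : ℝ :=
  if ω.1 e = true ∧ ¬(∀ x ∈ e, ω.2 x = true) then chiB p true else chiB p false

/-!
Condition on the planted set `S`. Given `S`, the edge variables are independent, so the
expectation of `χ_{E(α)}(G̃)` factorises over the edges of `α`: an edge inside `S` is deleted, so
its character is the constant `χ(0) = √(p/(1-p))`, while every other edge contributes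
`E[χ(G_e)] = 0`. The conditional expectation is therefore `√(p/(1-p))^{|E(α)|}` times the
indicator of `V(α) ⊆ S`, and averaging `x_T(S) · 1[V(α) ⊆ S] = 1[V(α) ∪ T ⊆ S]` over `S` gives
`(k/n)^{|V(α) ∪ T|}`.
-/

theorem integral_finset_prod_eq_prod {𝕜 ι : Type*} [RCLike 𝕜] [Fintype ι] {E : ι → Type*}
    {mE : ∀ i, MeasurableSpace (E i)} {μ : (i : ι) → Measure (E i)}
    [∀ i, IsProbabilityMeasure (μ i)] (s : Finset ι) (f : (i : ι) → E i → 𝕜) :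
    ∫ x, ∏ i ∈ s, f i (x i) ∂(Measure.pi μ) = ∏ i ∈ s, ∫ x, f i x ∂(μ i) := by
  classical
  have h := integral_fintype_prod_eq_prod (μ := μ) fun i y => if i ∈ s then f i y else 1
  have integral_ite (i : ι) :
      ∫ x, (if i ∈ s then f i x else 1) ∂(μ i) = if i ∈ s then ∫ x, f i x ∂(μ i) else 1 := by
    split_ifs <;> simp
  simpa only [Fintype.prod_ite_mem, integral_ite] using h

instance (p : ℝ) : IsProbabilityMeasure (bern p) :=
  PMF.toMeasure.isProbabilityMeasure _

theorem integral_bern {q : ℝ} (hq0 : 0 ≤ q) (hq1 : q ≤ 1) (f : Bool → ℝ) :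
    ∫ b, f b ∂(bern q) = (1 - q) * f false + q * f true := by
  have hle : Real.toNNReal q ≤ 1 := Real.toNNReal_le_one.mpr hq1
  rw [integral_fintype Integrable.of_finite]
  simp only [Fintype.sum_bool, bern, min_eq_left hle, measureReal_def,
    PMF.toMeasure_apply_singleton _ _ (measurableSet_singleton _), PMF.bernoulli_apply,
    Bool.cond_true, Bool.cond_false, smul_eq_mul, ENNReal.coe_toReal, NNReal.coe_sub hle,
    NNReal.coe_one, Real.coe_toNNReal _ hq0]
  ring

theorem integral_boole_forall_mem_pi_bern {ι : Type*} [Fintype ι] {q : ℝ} (hq0 : 0 ≤ q)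
    (hq1 : q ≤ 1) (A : Finset ι) [DecidablePred fun s : ι → Bool => ∀ i ∈ A, s i = true] :
    ∫ s, (if ∀ i ∈ A, s i = true then (1 : ℝ) else 0) ∂(Measure.pi fun _ : ι => bern q)
      = q ^ A.card := by
  have boole_eq_prod (s : ι → Bool) : (if ∀ i ∈ A, s i = true then (1 : ℝ) else 0)
      = ∏ i ∈ A, if s i = true then 1 else 0 := by
    rw [eq_comm]
    convert Finset.prod_boole
  rw [integral_congr_ae (.of_forall boole_eq_prod),
    integral_finset_prod_eq_prod A fun _ b => if b = true then (1 : ℝ) else 0]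
  simp [integral_bern hq0 hq1]

theorem integral_chiB_bern {p : ℝ} (hp0 : 0 < p) (hp1 : p < 1) :
    ∫ b, chiB p b ∂(bern p) = 0 := by
  have h1p : 0 < 1 - p := by linarith
  rw [integral_bern hp0.le hp1.le, chiB, chiB, if_neg Bool.false_ne_true, if_pos rfl,
    Real.sqrt_div hp0.le, Real.sqrt_div h1p.le]
  have hsp : 0 < Real.sqrt p := Real.sqrt_pos.mpr hp0
  have hs1p : 0 < Real.sqrt (1 - p) := Real.sqrt_pos.mpr h1p
  field_simp
  rw [Real.sq_sqrt hp0.le, Real.sq_sqrt h1p.le]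
  ring

theorem tildeChi_eq (n : ℕ) (p : ℝ) (ω : (Sym2 (Fin n) → Bool) × (Fin n → Bool))
    (e : Sym2 (Fin n)) :
    tildeChi n p ω e = if ∀ x ∈ e, ω.2 x = true then chiB p false else chiB p (ω.1 e) := by
  unfold tildeChi
  by_cases h : ∀ x ∈ e, ω.2 x = true
  · rw [if_neg fun h' => h'.2 h, if_pos h]
  · rw [if_neg h]
    cases ω.1 e
    · exact if_neg fun h' => Bool.false_ne_true h'.1
    · exact if_pos ⟨rfl, h⟩

theorem integral_prod_tildeChi {n : ℕ} {p : ℝ} (hp0 : 0 < p) (hp1 : p < 1)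
    (E : Finset (Sym2 (Fin n))) (s : Fin n → Bool) :
    ∫ g, ∏ e ∈ E, tildeChi n p (g, s) e ∂(Measure.pi fun _ : Sym2 (Fin n) => bern p)
      = if ∀ e ∈ E, ∀ x ∈ e, s x = true then Real.sqrt (p / (1 - p)) ^ E.card else 0 := by
  simp only [tildeChi_eq]
  rw [integral_finset_prod_eq_prod E fun e b =>
    if ∀ x ∈ e, s x = true then chiB p false else chiB p b]
  have integral_edge (e : Sym2 (Fin n)) :
      ∫ b, (if ∀ x ∈ e, s x = true then chiB p false else chiB p b) ∂(bern p)
        = if ∀ x ∈ e, s x = true then Real.sqrt (p / (1 - p)) else 0 := by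
    split_ifs
    · rw [integral_const, probReal_univ, one_smul, chiB, if_neg Bool.false_ne_true]
    · exact integral_chiB_bern hp0 hp1
  simp only [integral_edge, Finset.prod_ite_zero, Finset.prod_const]

theorem stmt14_general (n : ℕ) (p k : ℝ) (hp0 : 0 < p) (hp1 : p < 1)
    (hk0 : 0 ≤ k) (hkn : k ≤ n)
    (T : Finset (Fin n)) (Eα : Finset (Sym2 (Fin n))) (Vα : Finset (Fin n))
    (hVα : ∀ v : Fin n, v ∈ Vα ↔ ∃ e ∈ Eα, v ∈ e) :
    ∫ ω, (if ∀ t ∈ T, ω.2 t = true then (1 : ℝ) else 0) *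
          ∏ e ∈ Eα, tildeChi n p ω e ∂(PlantedMeasure n p (k / n))
      = (k / n) ^ (Vα ∪ T).card * Real.sqrt (p / (1 - p)) ^ Eα.card := by
  have hq0 : 0 ≤ k / n := div_nonneg hk0 n.cast_nonneg
  have hq1 : k / n ≤ 1 := div_le_one_of_le₀ hkn n.cast_nonneg
  have edges_inside_iff (s : Fin n → Bool) :
      (∀ e ∈ Eα, ∀ x ∈ e, s x = true) ↔ ∀ v ∈ Vα, s v = true :=
    ⟨fun h v hv => by obtain ⟨e, he, hve⟩ := (hVα v).1 hv; exact h e he v hve,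
     fun h e he x hx => h x ((hVα x).2 ⟨e, he, hx⟩)⟩
  have integral_given_planted (s : Fin n → Bool) :
      ∫ g, (if ∀ t ∈ T, s t = true then (1 : ℝ) else 0) * ∏ e ∈ Eα, tildeChi n p (g, s) e
          ∂(Measure.pi fun _ => bern p)
        = (if ∀ v ∈ Vα ∪ T, s v = true then 1 else 0) * Real.sqrt (p / (1 - p)) ^ Eα.card := by
    rw [integral_const_mul, integral_prod_tildeChi hp0 hp1, ite_zero_mul_ite_zero, one_mul,
      ite_zero_mul, one_mul]
    exact if_congr (by rw [Finset.forall_mem_union, edges_inside_iff, and_comm]) rfl rfl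
  rw [PlantedMeasure, integral_prod_symm _ Integrable.of_finite]
  simp only [integral_given_planted, integral_mul_const]
  rw [integral_boole_forall_mem_pi_bern hq0 hq1]

theorem stmt14 (n : ℕ) (p k : ℝ) (hp0 : 0 < p) (hp1 : p < 1)
    (hk0 : 0 ≤ k) (hkn : k ≤ n)
    (T : Finset (Fin n)) (Eα : Finset (Sym2 (Fin n))) (Vα : Finset (Fin n))
    (hdiag : ∀ e ∈ Eα, ¬e.IsDiag)
    (hVα : ∀ v : Fin n, v ∈ Vα ↔ ∃ e ∈ Eα, v ∈ e) :
    ∫ ω, (if ∀ t ∈ T, ω.2 t = true then (1 : ℝ) else 0) *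
          ∏ e ∈ Eα, tildeChi n p ω e ∂(PlantedMeasure n p (k / n))
      = (k / n) ^ (Vα ∪ T).card * Real.sqrt (p / (1 - p)) ^ Eα.card :=
  stmt14_general n p k hp0 hp1 hk0 hkn T Eα Vα hVα
end

section
/- Let γ be a 'left shape': a graph with distinguished subsets U_γ, V_γ such that V_γ is the unique minimum vertex separator between U_γ and V_γ and every vertex is connected to U_γ. Then there exists a set Res(γ) ⊆ E(γ) of at most 2|V(γ)| edges such that, for any subset F ⊆ E(γ)∖Res(γ), the graph (V(γ), E(γ)∖F) still has V_γ as its unique minimum vertex separator between U_γ and V_γ and every vertex connected to U_γ. -/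
/-- `γ` with distinguished subsets `U`, `W` is a left shape: `W` is the unique
minimum vertex separator between `U` and `W`, and every vertex is connected to `U`. -/
def IsLeftShape {V : Type*} (G : SimpleGraph V) (U W : Set V) : Prop :=
  IsSeparator G U W W ∧
  (∀ S : Set V, IsSeparator G U W S → W.ncard ≤ S.ncard) ∧
  (∀ S : Set V, IsSeparator G U W S → S.ncard = W.ncard → S = W) ∧
  (∀ v : V, ∃ u ∈ U, G.Reachable v u)

namespace Relation

variable {α : Type*} {r r' : α → α → Prop} {S X : Set α} {a b : α}

def reachSet (r : α → α → Prop) (S : Set α) : Set α := {b | ∃ a ∈ S, ReflTransGen r a b}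

lemma subset_reachSet : S ⊆ reachSet r S := fun a ha => ⟨a, ha, .refl⟩

lemma reachSet_mono (h : r ≤ r') : reachSet r S ⊆ reachSet r' S :=
  fun _ ⟨a, ha, hab⟩ => ⟨a, ha, ReflTransGen.mono h _ _ hab⟩

lemma mem_reachSet_of_rel (ha : a ∈ reachSet r S) (hab : r a b) : b ∈ reachSet r S :=
  let ⟨s, hs, hsa⟩ := ha; ⟨s, hs, hsa.tail hab⟩

lemma ReflTransGen.exists_rel_mem_notMem (h : ReflTransGen r a b) (ha : a ∈ X) (hb : b ∉ X) :
    ∃ c ∈ X, ∃ d ∉ X, r c d := by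
  induction h with
  | refl => exact absurd ha hb
  | @tail c d _ hcd ih => by_cases hc : c ∈ X; exacts [⟨c, hc, d, hb, hcd⟩, ih hc]

lemma ReflTransGen.of_forall_rel (h : ReflTransGen r a b)
    (hr : ∀ x y, ReflTransGen r a x → r x y → ReflTransGen r y b → r' x y) :
    ReflTransGen r' a b := by
  induction h with
  | refl => exact .refl
  | @tail c d hac hcd ih =>
    exact (ih fun x y hax hxy hyc => hr x y hax hxy (hyc.tail hcd)).tail (hr c d hac hcd .refl)

lemma exists_reflTransGen_forall_not_rel [Finite α] (hr : ∀ a, ¬ TransGen r a a) (a : α) :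
    ∃ b, ReflTransGen r a b ∧ ∀ c, ¬ r b c := by
  have : IsTrans α (flip (TransGen r)) := ⟨fun _ _ _ h₁ h₂ => h₂.trans h₁⟩
  have : Std.Irrefl (flip (TransGen r)) := ⟨hr⟩
  obtain ⟨b, hab, hmax⟩ := (Finite.wellFounded_of_trans_of_irrefl (flip (TransGen r))).has_min
    {b | ReflTransGen r a b} ⟨a, .refl⟩
  exact ⟨b, hab, fun c hbc => hmax c (hab.tail hbc) (.single hbc)⟩

lemma ReflTransGen.exists_isChain_nodup (h : ReflTransGen r a b) :
    ∃ l, (a :: l).IsChain r ∧ (a :: l).getLast? = some b ∧ (a :: l).Nodup := by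
  induction h using ReflTransGen.head_induction_on with
  | refl => exact ⟨[], .singleton _, rfl, List.nodup_singleton _⟩
  | @head a c hac _ ih =>
    obtain ⟨l, hchain, hlast, hnodup⟩ := ih
    by_cases hmem : a ∈ c :: l
    · obtain ⟨l₁, l₂, hl⟩ := List.append_of_mem hmem
      rw [hl] at hchain hlast hnodup
      exact ⟨l₂, hchain.right_of_append,
        by rwa [List.getLast?_append_of_ne_nil _ (List.cons_ne_nil _ _)] at hlast,
        hnodup.sublist (List.sublist_append_right _ _)⟩
    · exact ⟨c :: l, hchain.cons_cons hac, by rwa [List.getLast?_cons_cons],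
        List.nodup_cons.mpr ⟨hmem, hnodup⟩⟩

lemma exists_parent_forest [Finite α] (B E : α → α → Prop) (S : Set α) :
    ∃ par : α → Option α,
      (∀ a b, par b = some a → E a b ∧ b ∈ reachSet (B ⊔ E) S \ reachSet B S) ∧
      reachSet (B ⊔ E) S ⊆ reachSet (B ⊔ fun a b => par b = some a) S := by
  classical
  set good : Set (α → Option α) := {par | ∀ a b, par b = some a →
    E a b ∧ a ∈ reachSet (B ⊔ fun a b => par b = some a) S ∧ b ∉ reachSet B S}
  obtain ⟨par, hpar, hmax⟩ := good.exists_max_image (fun par => {b | par b ≠ none}.ncard)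
    good.toFinite ⟨fun _ => none, by simp [good]⟩
  set P : α → α → Prop := fun a b => par b = some a
  have hBP : reachSet B S ⊆ reachSet (B ⊔ P) S := reachSet_mono le_sup_left
  have hPE : reachSet (B ⊔ P) S ⊆ reachSet (B ⊔ E) S :=
    reachSet_mono (sup_le_sup_left (fun a b h => (hpar a b h).1) _)
  refine ⟨par, fun a b h => ⟨(hpar a b h).1, mem_reachSet_of_rel (hPE (hpar a b h).2.1)
    (Or.inr (hpar a b h).1), (hpar a b h).2.2⟩, ?_⟩
  rintro b ⟨s, hs, hsb⟩
  by_contra hb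
  -- a step of the path to `b` leaves the part reached through `par`; adopt its target
  obtain ⟨c, hc, d, hd, hcd⟩ := hsb.exists_rel_mem_notMem (subset_reachSet hs) hb
  have hcd : E c d := hcd.resolve_left fun h => hd (mem_reachSet_of_rel hc (Or.inl h))
  have hpard : par d = none := by
    by_contra hne
    obtain ⟨a, ha⟩ := Option.ne_none_iff_exists'.mp hne
    exact hd (mem_reachSet_of_rel (hpar a d ha).2.1 (Or.inr ha))
  set par' := Function.update par d (some c)
  have hPP' : reachSet (B ⊔ P) S ⊆ reachSet (B ⊔ fun a b => par' b = some a) S := by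
    refine reachSet_mono (sup_le_sup_left (fun a b h => ?_) _)
    have : b ≠ d := by rintro rfl; simp [P, hpard] at h
    simpa [par', this] using h
  have hgood : par' ∈ good := by
    intro a b hab
    by_cases hbd : b = d
    · subst hbd
      obtain rfl : c = a := by simpa [par'] using hab
      exact ⟨hcd, hPP' hc, fun h => hd (hBP h)⟩
    · have := hpar a b (by simpa [par', hbd] using hab)
      exact ⟨this.1, hPP' this.2.1, this.2.2⟩
  have hlt : {b | par b ≠ none}.ncard < {b | par' b ≠ none}.ncard := by
    refine Set.ncard_lt_ncard ⟨fun b hb => ?_, fun h => h (by simp [par']) hpard⟩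
      (Set.toFinite _)
    have : b ≠ d := by rintro rfl; exact hb hpard
    simpa [par', this] using hb
  exact absurd (hmax par' hgood) (not_le.mpr hlt)

end Relation

open Relation

namespace SimpleGraph

variable {V : Type*} {G H : SimpleGraph V} {r : V → V → Prop} {U : Set V} {a b : V}

lemma exists_walk_of_reflTransGen (hr : ∀ ⦃x y⦄, r x y → H.Adj x y)
    (h : ReflTransGen r a b) :
    ∃ p : H.Walk a b, ∀ x ∈ p.support, ReflTransGen r a x ∧ ReflTransGen r x b := by
  induction h with
  | refl => exact ⟨.nil, by simp [ReflTransGen.refl]⟩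
  | @tail c d _ hcd ih =>
    obtain ⟨p, hp⟩ := ih
    refine ⟨p.concat (hr hcd), fun x hx => ?_⟩
    rw [Walk.support_concat, List.mem_append, List.mem_singleton] at hx
    rcases hx with hx | rfl
    exacts [⟨(hp x hx).1, (hp x hx).2.tail hcd⟩,
      ⟨(hp c p.end_mem_support).1.tail hcd, .refl⟩]

theorem exists_connecting_supergraph [Finite V] (hle : H ≤ G)
    (hG : ∀ v, ∃ u ∈ U, G.Reachable v u) :
    ∃ H', H ≤ H' ∧ H' ≤ G ∧
      H'.edgeSet.ncard ≤ H.edgeSet.ncard + (reachSet H.Adj U)ᶜ.ncard ∧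
      ∀ v, ∃ u ∈ U, H'.Reachable v u := by
  obtain ⟨par, hpar, hspan⟩ := exists_parent_forest H.Adj G.Adj U
  set forest : Set (Sym2 V) := {e | ∃ a b, par b = some a ∧ e = s(a, b)}
  have hforest : ∀ a b, par b = some a → (fromEdgeSet forest).Adj a b := fun a b h =>
    (fromEdgeSet_adj _).mpr ⟨⟨a, b, h, rfl⟩, (hpar a b h).1.ne⟩
  refine ⟨H ⊔ fromEdgeSet forest, le_sup_left, sup_le hle fun v w hvw => ?_, ?_, fun v => ?_⟩
  · obtain ⟨⟨a, b, hab, he⟩, -⟩ := (fromEdgeSet_adj _).mp hvw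
    rw [← mem_edgeSet, he]; exact (hpar a b hab).1
  · have hsub : forest ⊆ (fun b => s((par b).getD b, b)) '' {b | par b ≠ none} := by
      rintro _ ⟨a, b, hab, rfl⟩
      exact ⟨b, by simp [hab], by simp [hab]⟩
    have hdom : {b | par b ≠ none} ⊆ (reachSet H.Adj U)ᶜ := fun b hb => by
      obtain ⟨a, ha⟩ := Option.ne_none_iff_exists'.mp hb
      exact (hpar a b ha).2.2
    rw [edgeSet_sup, edgeSet_fromEdgeSet]
    exact (Set.ncard_union_le _ _).trans <| Nat.add_le_add_left ((Set.ncard_le_ncard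
      (Set.sdiff_subset.trans hsub) (Set.toFinite _)).trans <|
      (Set.ncard_image_le (Set.toFinite _)).trans (Set.ncard_le_ncard hdom (Set.toFinite _))) _
  · obtain ⟨u, hu, huv⟩ := hG v
    obtain ⟨u', hu', hu'v⟩ := hspan (reachSet_mono le_sup_right
      ⟨u, hu, (reachable_iff_reflTransGen u v).mp huv.symm⟩)
    refine ⟨u', hu', ((reachable_iff_reflTransGen u' v).mpr ?_).symm⟩
    exact ReflTransGen.mono (fun a b h => h.elim (Or.inl ·) (Or.inr <| hforest a b ·)) _ _ hu'v

end SimpleGraph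

section Separators

variable {V : Type*} {G H : SimpleGraph V} {A B S U W : Set V}

def IsUniqueMinSeparator (G : SimpleGraph V) (U W : Set V) : Prop :=
  ∀ S, IsSeparator G U W S → S.ncard ≤ W.ncard → S = W

lemma IsSeparator.of_le (hle : G ≤ H) (h : IsSeparator H A B S) : IsSeparator G A B S :=
  fun a ha b hb p => by
    simpa [SimpleGraph.Walk.support_mapLe_eq_support] using h a ha b hb (p.mapLe hle)

lemma IsUniqueMinSeparator.mono (hle : G ≤ H) (h : IsUniqueMinSeparator G U W) :
    IsUniqueMinSeparator H U W :=
  fun S hS hcard => h S (hS.of_le hle) hcard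

lemma isLeftShape_iff :
    IsLeftShape G U W ↔ IsUniqueMinSeparator G U W ∧ ∀ v, ∃ u ∈ U, G.Reachable v u := by
  refine ⟨fun ⟨_, hmin, huniq, hconn⟩ => ⟨fun S hS hcard => huniq S hS
    (le_antisymm hcard (hmin S hS)), hconn⟩, fun ⟨h, hconn⟩ => ⟨fun _ _ b hb p =>
    ⟨b, p.end_mem_support, hb⟩, fun S hS => ?_, fun S hS hcard => h S hS hcard.le, hconn⟩⟩
  by_contra! hlt
  exact hlt.ne (congrArg Set.ncard (h S hS hlt.le))

lemma IsLeftShape.mono (hle : G ≤ H) (h : IsLeftShape G U W) : IsLeftShape H U W := by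
  rw [isLeftShape_iff] at h ⊢
  exact ⟨h.1.mono hle, fun v => (h.2 v).imp fun _ hu => ⟨hu.1, hu.2.mono hle⟩⟩

end Separators

namespace Menger

variable {V : Type*} {G H : SimpleGraph V} {U W T S : Set V} {f f' : V → Option V}
  {a b b' w x x' y : V}

def HasPrev (f : V → Option V) (v : V) : Prop := ∃ z, f z = some v

/-- Vertex-disjoint paths from `U` to `T`, and possibly cycles, in `G`: `f x = some y` when the
path through `x` continues with `y`. A vertex of `U ∩ T` on no path is a one-vertex path. -/
structure IsLinkage (G : SimpleGraph V) (U T : Set V) (f : V → Option V) : Prop where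
  adj : ∀ ⦃x y⦄, f x = some y → G.Adj x y
  inj : ∀ ⦃x x' y⦄, f x = some y → f x' = some y → x = x'
  source_mem : ∀ ⦃x y⦄, f x = some y → ¬ HasPrev f x → x ∈ U
  sink_mem : ∀ ⦃x y⦄, f x = some y → f y = none → y ∈ T

def Terminal (U : Set V) (f : V → Option V) (v : V) : Prop :=
  f v = none ∧ (v ∈ U ∨ HasPrev f v)

def ends (U T : Set V) (f : V → Option V) : Set V := {v | v ∈ T ∧ Terminal U f v}

def Free (U W : Set V) (f : V → Option V) (v : V) : Prop :=
  ¬ HasPrev f v ∧ f v = none ∧ ¬ (v ∈ U ∧ v ∈ W)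

def IsNext (f : V → Option V) (a b : V) : Prop := f a = some b

def OnCycle (f : V → Option V) (v : V) : Prop := TransGen (IsNext f) v v

def Acyclic (f : V → Option V) : Prop := ∀ v, ¬ OnCycle f v

lemma rightUnique_isNext : Relator.RightUnique (IsNext f) :=
  fun _ _ _ h h' => Option.some_inj.mp (h.symm.trans h')

lemma IsLinkage.rightUnique_swap (hf : IsLinkage G U T f) :
    Relator.RightUnique (Function.swap (IsNext f)) :=
  fun _ _ _ h h' => hf.inj h h'

lemma eq_of_reflTransGen_of_eq_none (h : ReflTransGen (IsNext f) a b) (ha : f a = none) :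
    a = b := by
  rcases h.cases_head with rfl | ⟨c, hac, -⟩
  exacts [rfl, absurd (hac.symm.trans ha) (Option.some_ne_none c)]

lemma not_onCycle_of_eq_none (ha : f a = none) : ¬ OnCycle f a := fun h => by
  obtain ⟨c, hac, -⟩ := TransGen.head'_iff.mp h
  exact absurd (hac.symm.trans ha) (Option.some_ne_none c)

lemma OnCycle.next (ha : OnCycle f a) (hab : IsNext f a b) : OnCycle f b := by
  obtain ⟨c, hac, hca⟩ := TransGen.head'_iff.mp ha
  obtain rfl := rightUnique_isNext hab hac
  exact TransGen.tail'_iff.mpr ⟨a, hca, hab⟩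

lemma IsLinkage.onCycle_prev (hf : IsLinkage G U T f) (hab : IsNext f a b) (hb : OnCycle f b) :
    OnCycle f a := by
  obtain ⟨c, hbc, hcb⟩ := TransGen.tail'_iff.mp hb
  obtain rfl := hf.inj hab hcb
  exact TransGen.head'_iff.mpr ⟨b, hab, hbc⟩

lemma IsLinkage.reflTransGen_of_not_hasPrev (hf : IsLinkage G U T f) (ha : ¬ HasPrev f a)
    (haw : ReflTransGen (IsNext f) a w) (hbw : ReflTransGen (IsNext f) b w) :
    ReflTransGen (IsNext f) a b := by
  rcases ReflTransGen.total_of_right_unique hf.rightUnique_swap (reflTransGen_swap.mpr haw)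
    (reflTransGen_swap.mpr hbw) with h | h <;> rw [reflTransGen_swap] at h
  · rcases h.cases_tail with rfl | ⟨c, -, hca⟩
    exacts [.refl, absurd ⟨c, hca⟩ ha]
  · exact h

lemma eq_of_reflTransGen_of_mem_ends (h : ReflTransGen (IsNext f) a b)
    (h' : ReflTransGen (IsNext f) a b') (hb : b ∈ ends U T f) (hb' : b' ∈ ends U T f) :
    b = b' := by
  rcases ReflTransGen.total_of_right_unique rightUnique_isNext h h' with h | h
  exacts [eq_of_reflTransGen_of_eq_none h hb.2.1, (eq_of_reflTransGen_of_eq_none h hb'.2.1).symm]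

lemma not_free_of_reflTransGen (h : ReflTransGen (IsNext f) a b) (hb : b ∈ ends U W f) :
    ¬ Free U W f a := by
  rintro ⟨hprev, hnone, hUW⟩
  rcases h.cases_head with rfl | ⟨c, hac, -⟩
  · exact hb.2.2.elim (fun hU => hUW ⟨hU, hb.1⟩) hprev
  · exact Option.some_ne_none c (hac.symm.trans hnone)

lemma mem_ends_of_eq_none (hf : IsLinkage G U W f) (hb : f b = none) (hfree : ¬ Free U W f b) :
    b ∈ ends U W f := by
  by_cases hprev : HasPrev f b
  · obtain ⟨a, hab⟩ := hprev
    exact ⟨hf.sink_mem hab hb, hb, Or.inr ⟨a, hab⟩⟩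
  · have : b ∈ U ∧ b ∈ W := by by_contra h; exact hfree ⟨hprev, hb, h⟩
    exact ⟨this.2, hb, Or.inl this.1⟩

lemma exists_mem_ends [Finite V] (hf : IsLinkage G U W f) (hacyc : Acyclic f)
    (hfree : ¬ Free U W f a) : ∃ b ∈ ends U W f, ReflTransGen (IsNext f) a b := by
  obtain ⟨b, hab, hb⟩ := exists_reflTransGen_forall_not_rel hacyc a
  refine ⟨b, mem_ends_of_eq_none hf (Option.eq_none_iff_forall_ne_some.mpr hb) ?_, hab⟩
  rcases hab.cases_tail with rfl | ⟨c, -, hcb⟩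
  exacts [hfree, fun h => h.1 ⟨c, hcb⟩]

lemma IsLinkage.exists_source [Finite V] (hf : IsLinkage G U W f) (hacyc : Acyclic f)
    (hb : b ∈ ends U W f) : ∃ s ∈ U, ReflTransGen (IsNext f) s b ∧ ¬ HasPrev f s := by
  obtain ⟨s, hbs, hs⟩ := exists_reflTransGen_forall_not_rel
    (r := Function.swap (IsNext f)) (fun a ha => hacyc a (transGen_swap.mp ha)) b
  have hsb := reflTransGen_swap.mp hbs
  have hprev : ¬ HasPrev f s := fun ⟨z, hz⟩ => hs z hz
  refine ⟨s, ?_, hsb, hprev⟩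
  rcases hsb.cases_head with rfl | ⟨c, hsc, -⟩
  exacts [hb.2.2.resolve_right hprev, hf.source_mem hsc hprev]

open Classical in
noncomputable def prune (f : V → Option V) : V → Option V :=
  fun v => if OnCycle f v then none else f v

lemma isNext_of_isNext_prune (h : IsNext (prune f) a b) : IsNext f a b := by
  unfold IsNext prune at *; split_ifs at h; exact h

lemma prune_eq_of_not_onCycle (h : ¬ OnCycle f a) : prune f a = f a := if_neg h

lemma not_onCycle_of_prune_eq_some (h : prune f a = some b) : ¬ OnCycle f a := fun ha => by
  simp [prune, ha] at h

lemma acyclic_prune : Acyclic (prune f) := fun v hv => by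
  obtain ⟨c, hvc, -⟩ := TransGen.head'_iff.mp hv
  exact not_onCycle_of_prune_eq_some hvc
    (TransGen.mono (fun _ _ => isNext_of_isNext_prune) _ _ hv)

lemma IsLinkage.prune (hf : IsLinkage G U T f) : IsLinkage G U T (prune f) := by
  refine ⟨fun _ _ h => hf.adj (isNext_of_isNext_prune h),
    fun _ _ _ h h' => hf.inj (isNext_of_isNext_prune h) (isNext_of_isNext_prune h'),
    fun x y h hx => hf.source_mem (isNext_of_isNext_prune h) ?_, fun x y h hy => ?_⟩
  · rintro ⟨z, hzx⟩
    have hz : ¬ OnCycle f z := fun hz => not_onCycle_of_prune_eq_some h (hz.next hzx)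
    exact hx ⟨z, (prune_eq_of_not_onCycle hz).trans hzx⟩
  · refine hf.sink_mem (isNext_of_isNext_prune h) ?_
    rwa [prune_eq_of_not_onCycle fun hy' => not_onCycle_of_prune_eq_some h
      (hf.onCycle_prev (isNext_of_isNext_prune h) hy')] at hy

lemma ends_subset_ends_prune : ends U T f ⊆ ends U T (prune f) := by
  rintro v ⟨hvT, hv, hvU⟩
  refine ⟨hvT, (prune_eq_of_not_onCycle (not_onCycle_of_eq_none hv)).trans hv, hvU.imp id ?_⟩
  rintro ⟨z, hzv⟩
  exact ⟨z, (prune_eq_of_not_onCycle fun hz => not_onCycle_of_eq_none hv (hz.next hzv)).trans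
    hzv⟩

/-- Residual arcs of the vertex-split digraph, `(v, false)` and `(v, true)` being the in- and the
out-copy of `v`. `leave` needs no side condition: for a vertex off the paths it only returns to an
in-copy that was reached before. -/
inductive FlowArc (U W : Set V) (f : V → Option V) : V × Bool → V × Bool → Prop
  | enter {v : V} : Free U W f v → FlowArc U W f (v, false) (v, true)
  | leave (v : V) : FlowArc U W f (v, true) (v, false)
  | back {x y : V} : f x = some y → FlowArc U W f (y, false) (x, true)

def EdgeArc (G : SimpleGraph V) (a b : V × Bool) : Prop :=
  a.2 = true ∧ b.2 = false ∧ G.Adj a.1 b.1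

def resReach (G : SimpleGraph V) (U W : Set V) (f : V → Option V) : Set (V × Bool) :=
  reachSet (FlowArc U W f ⊔ EdgeArc G) ((·, false) '' U)

def frontier (G : SimpleGraph V) (U W : Set V) (f : V → Option V) : Set V :=
  {v | (v, false) ∈ resReach G U W f ∧ (v, true) ∉ resReach G U W f}

lemma exists_mem_frontier_of_walk (hW : ∀ w ∈ W, (w, true) ∉ resReach G U W f)
    (p : G.Walk a b) (ha : (a, false) ∈ resReach G U W f) (hb : b ∈ W) :
    ∃ x ∈ p.support, x ∈ frontier G U W f := by
  induction p with
  | nil => exact ⟨_, List.mem_singleton_self _, ha, hW _ hb⟩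
  | @cons a c _ hac p ih =>
    by_cases ha' : (a, true) ∈ resReach G U W f
    · obtain ⟨x, hx, hxS⟩ := ih (mem_reachSet_of_rel ha' (Or.inr ⟨rfl, rfl, hac⟩)) hb
      exact ⟨x, List.mem_cons_of_mem _ hx, hxS⟩
    · exact ⟨a, List.mem_cons_self .., ha, ha'⟩

lemma isSeparator_frontier (hW : ∀ w ∈ W, (w, true) ∉ resReach G U W f) :
    IsSeparator G U W (frontier G U W f) :=
  fun _ hu _ hw p => exists_mem_frontier_of_walk hW p (subset_reachSet ⟨_, hu, rfl⟩) hw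

lemma mem_resReach_of_transGen (hab : TransGen (IsNext f) a b)
    (hb : (b, false) ∈ resReach G U W f) : (a, true) ∈ resReach G U W f := by
  induction hab using TransGen.head_induction_on with
  | single h => exact mem_reachSet_of_rel hb (Or.inl (.back h))
  | head h _ ih =>
    exact mem_reachSet_of_rel (mem_reachSet_of_rel ih (Or.inl (.leave _))) (Or.inl (.back h))

lemma ncard_frontier_le [Finite V] (hf : IsLinkage G U W f) (hacyc : Acyclic f) :
    (frontier G U W f).ncard ≤ (ends U W f).ncard := by
  have hend : ∀ v ∈ frontier G U W f, ∃ b ∈ ends U W f, ReflTransGen (IsNext f) v b :=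
    fun v hv => exists_mem_ends hf hacyc fun hfree =>
      hv.2 (mem_reachSet_of_rel hv.1 (Or.inl (.enter hfree)))
  choose! e he hve using hend
  refine Set.ncard_le_ncard_of_injOn e he (fun v hv v' hv' hvv' => ?_) (Set.toFinite _)
  have hv'e : ReflTransGen (Function.swap (IsNext f)) (e v) v' := by
    rw [reflTransGen_swap, hvv']; exact hve v' hv'
  -- of two frontier vertices on one path, the later one would make the earlier one's out-copy
  -- reachable
  rcases ReflTransGen.total_of_right_unique hf.rightUnique_swap
      (reflTransGen_swap.mpr (hve v hv)) hv'e
    with h | h <;> rw [reflTransGen_swap] at h <;> rcases h.cases_head with h | ⟨c, hc, hc'⟩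
  · exact h.symm
  · exact absurd (mem_resReach_of_transGen (TransGen.head' hc hc') hv.1) hv'.2
  · exact h
  · exact absurd (mem_resReach_of_transGen (TransGen.head' hc hc') hv'.1) hv.2

/-- Two residual arcs from the out-copy of `x` to the out-copy of `x'`, through the in-copy of
`x'` when it is free or of `y = f x'` otherwise. -/
def Hop (G : SimpleGraph V) (U W : Set V) (f : V → Option V) (x x' : V) : Prop :=
  (G.Adj x x' ∧ Free U W f x') ∨ ∃ y, f x' = some y ∧ (G.Adj x y ∨ y = x)

def Start (U W : Set V) (f : V → Option V) (x : V) : Prop :=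
  (x ∈ U ∧ Free U W f x) ∨ ∃ u ∈ U, f x = some u

lemma Hop.mono (hb : f' b = f b) (hprev : HasPrev f' b → HasPrev f b) :
    Hop G U W f a b → Hop G U W f' a b := by
  rintro (⟨hab, hfree, hnone, hUW⟩ | ⟨y, hy, h⟩)
  · exact Or.inl ⟨hab, mt hprev hfree, hb.trans hnone, hUW⟩
  · exact Or.inr ⟨y, hb.trans hy, h⟩

lemma exists_start_hop_of_mem_resReach (h : (w, true) ∈ resReach G U W f) :
    ∃ x, Start U W f x ∧ ReflTransGen (Hop G U W f) x w := by
  obtain ⟨_, ⟨u, hu, rfl⟩, hr⟩ := h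
  let HopReach (v : V) : Prop := ∃ x, Start U W f x ∧ ReflTransGen (Hop G U W f) x v
  let P (z : V × Bool) : Prop :=
    if z.2 then HopReach z.1 else z.1 ∈ U ∨ ∃ x, HopReach x ∧ (G.Adj x z.1 ∨ z.1 = x)
  suffices ∀ z, ReflTransGen (FlowArc U W f ⊔ EdgeArc G) (u, false) z → P z from this _ hr
  intro z hz
  induction hz with
  | refl => simp [P, hu]
  | @tail a b _ hab ih =>
    rcases hab with hab | ⟨ha, hb, hadj⟩
    · cases hab with
      | @enter v hfree =>
        simp only [P] at ih ⊢
        rcases ih with hv | ⟨x, hx, hxv | rfl⟩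
        · exact ⟨v, Or.inl ⟨hv, hfree⟩, .refl⟩
        · obtain ⟨x₀, hx₀, hx₀x⟩ := hx
          exact ⟨x₀, hx₀, hx₀x.tail (Or.inl ⟨hxv, hfree⟩)⟩
        · exact hx
      | leave v => exact Or.inr ⟨v, ih, Or.inr rfl⟩
      | @back x y hxy =>
        simp only [P] at ih ⊢
        rcases ih with hy | ⟨z, ⟨x₀, hx₀, hx₀z⟩, hzy⟩
        · exact ⟨x, Or.inr ⟨y, hy, hxy⟩, .refl⟩
        · exact ⟨x₀, hx₀, hx₀z.tail (Or.inr ⟨y, hxy, hzy⟩)⟩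
    · obtain ⟨a, _⟩ := a
      obtain ⟨b, _⟩ := b
      subst ha hb
      exact Or.inr ⟨a, ih, Or.inl hadj⟩

/-- One augmentation step, moving the end of the extra path from `x` (in `f`) to `x'` (in `f'`). -/
structure Reroute (G : SimpleGraph V) (U W E : Set V) (f : V → Option V) (x : V)
    (f' : V → Option V) (x' : V) : Prop where
  isLinkage : IsLinkage G U (insert x' W) f'
  terminal : Terminal U f' x'
  ends_subset : E ⊆ ends U (insert x' W) f' \ {x'}
  hop : ∀ a b, b ≠ x → b ≠ x' → Hop G U W f a b → Hop G U W f' a b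

lemma reroute_start_free (hf : IsLinkage G U W f) (hx : x ∈ U) (hfree : Free U W f x) :
    Reroute G U W (ends U W f) f x f x := by
  obtain ⟨adj, inj, src, snk⟩ := hf
  refine ⟨⟨adj, inj, src, fun a b h h' => Set.mem_insert_of_mem _ (snk h h')⟩, ?_, ?_,
    fun _ _ _ _ => id⟩
  all_goals simp only [Free, Terminal, HasPrev, ends, Set.subset_def, Set.mem_sdiff,
    Set.mem_ofPred_eq, Set.mem_singleton_iff, Set.mem_insert_iff] at *
  all_goals grind

lemma reroute_start_back [DecidableEq V] (hf : IsLinkage G U W f) (hy : y ∈ U)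
    (hxy : f x = some y) :
    Reroute G U W (ends U W f) f x (Function.update f x none) x := by
  have hloop := (hf.adj hxy).ne
  obtain ⟨adj, inj, src, snk⟩ := hf
  refine ⟨⟨?_, ?_, ?_, ?_⟩, ?_, ?_,
    fun a b _ hbx => Hop.mono (Function.update_of_ne hbx _ _) ?_⟩
  all_goals simp only [Terminal, HasPrev, ends, Set.subset_def, Set.mem_sdiff,
    Set.mem_ofPred_eq, Set.mem_singleton_iff, Set.mem_insert_iff, Function.update_apply] at *
  all_goals grind

lemma reroute_extend [DecidableEq V] (hf : IsLinkage G U (insert x W) f) (hx : Terminal U f x)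
    (hxy : G.Adj x y) (hy : Free U W f y) :
    Reroute G U W (ends U (insert x W) f \ {x}) f x (Function.update f x (some y)) y := by
  have hloop := hxy.ne
  obtain ⟨adj, inj, src, snk⟩ := hf
  refine ⟨⟨?_, ?_, ?_, ?_⟩, ?_, ?_,
    fun a b hbx _ => Hop.mono (Function.update_of_ne hbx _ _) ?_⟩
  all_goals simp only [Free, Terminal, HasPrev, ends, Set.subset_def, Set.mem_sdiff,
    Set.mem_ofPred_eq, Set.mem_singleton_iff, Set.mem_insert_iff, Function.update_apply] at *
  all_goals grind

lemma reroute_redirect [DecidableEq V] (hf : IsLinkage G U (insert x W) f)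
    (hx : Terminal U f x) (hxy : G.Adj x y) (hx'y : f x' = some y) (hxx' : x ≠ x') :
    Reroute G U W (ends U (insert x W) f \ {x}) f x
      (Function.update (Function.update f x' none) x (some y)) x' := by
  have hloop := (hf.adj hx'y).ne
  have hloop' := hxy.ne
  obtain ⟨adj, inj, src, snk⟩ := hf
  refine ⟨⟨?_, ?_, ?_, ?_⟩, ?_, ?_, fun a b hbx hbx' => Hop.mono (by simp [hbx, hbx']) ?_⟩
  all_goals simp only [Terminal, HasPrev, ends, Set.subset_def, Set.mem_sdiff,
    Set.mem_ofPred_eq, Set.mem_singleton_iff, Set.mem_insert_iff, Function.update_apply] at *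
  all_goals grind

lemma reroute_retreat [DecidableEq V] (hf : IsLinkage G U (insert x W) f) (hx : Terminal U f x)
    (hx'x : f x' = some x) :
    Reroute G U W (ends U (insert x W) f \ {x}) f x (Function.update f x' none) x' := by
  have hloop := (hf.adj hx'x).ne
  obtain ⟨adj, inj, src, snk⟩ := hf
  refine ⟨⟨?_, ?_, ?_, ?_⟩, ?_, ?_,
    fun a b _ hbx' => Hop.mono (Function.update_of_ne hbx' _ _) ?_⟩
  all_goals simp only [Terminal, HasPrev, ends, Set.subset_def, Set.mem_sdiff,
    Set.mem_ofPred_eq, Set.mem_singleton_iff, Set.mem_insert_iff, Function.update_apply] at *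
  all_goals grind

lemma exists_reroute_of_hop [DecidableEq V] (hf : IsLinkage G U (insert x W) f)
    (hx : Terminal U f x) (hop : Hop G U W f x x') (hxx' : x ≠ x') :
    ∃ f', Reroute G U W (ends U (insert x W) f \ {x}) f x f' x' := by
  rcases hop with ⟨hxx', hfree⟩ | ⟨y, hx'y, hxy | rfl⟩
  exacts [⟨_, reroute_extend hf hx hxx' hfree⟩, ⟨_, reroute_redirect hf hx hxy hx'y hxx'⟩,
    ⟨_, reroute_retreat hf hx hx'y⟩]

lemma exists_augment_of_isChain [Finite V] [DecidableEq V] (hw : w ∈ W) {l : List V}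
    (hf : IsLinkage G U (insert x W) f) (hx : Terminal U f x)
    (hchain : (x :: l).IsChain (Hop G U W f)) (hnodup : (x :: l).Nodup)
    (hlast : (x :: l).getLast? = some w) :
    ∃ f', IsLinkage G U W f' ∧ (ends U (insert x W) f \ {x}).ncard < (ends U W f').ncard := by
  induction l generalizing f x with
  | nil =>
    obtain rfl : x = w := by simpa using hlast
    rw [Set.insert_eq_of_mem hw] at hf ⊢
    exact ⟨f, hf, Set.ncard_sdiff_singleton_lt_of_mem ⟨hw, hx⟩⟩
  | cons x' l ih =>
    rw [List.isChain_cons_cons] at hchain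
    rw [List.nodup_cons, List.mem_cons, not_or] at hnodup
    obtain ⟨⟨hxx', hxl⟩, hnodup⟩ := hnodup
    have hx'l := (List.nodup_cons.mp hnodup).1
    obtain ⟨f', hf'⟩ := exists_reroute_of_hop hf hx hchain.1 hxx'
    obtain ⟨f'', hf'', hlt⟩ := ih hf'.isLinkage hf'.terminal
      (hchain.2.imp_of_mem_tail_imp fun a b _ hb =>
        hf'.hop a b (ne_of_mem_of_not_mem hb hxl) (ne_of_mem_of_not_mem hb hx'l))
      hnodup (by rwa [List.getLast?_cons_cons] at hlast)
    exact ⟨f'', hf'', (Set.ncard_le_ncard hf'.ends_subset (Set.toFinite _)).trans_lt hlt⟩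

theorem exists_augment [Finite V] (hf : IsLinkage G U W f) (hw : w ∈ W)
    (hr : (w, true) ∈ resReach G U W f) :
    ∃ f', IsLinkage G U W f' ∧ (ends U W f).ncard < (ends U W f').ncard := by
  classical
  obtain ⟨x, hstart, hxw⟩ := exists_start_hop_of_mem_resReach hr
  obtain ⟨l, hchain, hlast, hnodup⟩ := hxw.exists_isChain_nodup
  obtain ⟨f₀, hf₀⟩ : ∃ f₀, Reroute G U W (ends U W f) f x f₀ x := by
    rcases hstart with ⟨hx, hfree⟩ | ⟨u, hu, hxu⟩
    exacts [⟨f, reroute_start_free hf hx hfree⟩, ⟨_, reroute_start_back hf hu hxu⟩]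
  have hxl := (List.nodup_cons.mp hnodup).1
  obtain ⟨f', hf', hlt⟩ := exists_augment_of_isChain hw hf₀.isLinkage hf₀.terminal
    (hchain.imp_of_mem_tail_imp fun a b _ hb =>
      hf₀.hop a b (ne_of_mem_of_not_mem hb hxl) (ne_of_mem_of_not_mem hb hxl)) hnodup hlast
  exact ⟨f', hf', (Set.ncard_le_ncard hf₀.ends_subset (Set.toFinite _)).trans_lt hlt⟩

theorem exists_linkage_of_isUniqueMinSeparator [Finite V] (hW : IsUniqueMinSeparator G U W) :
    ∃ f, IsLinkage G U W f ∧ Acyclic f ∧ ends U W f = W ∧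
      ∀ w ∈ W, (w, false) ∈ resReach G U W f := by
  obtain ⟨f, ⟨hf, hacyc⟩, hmax⟩ := Set.exists_max_image
    {f | IsLinkage G U W f ∧ Acyclic f} (fun f => (ends U W f).ncard) (Set.toFinite _)
    ⟨fun _ => none, ⟨by simp, by simp, by simp, by simp⟩,
      fun _ => not_onCycle_of_eq_none rfl⟩
  have hno : ∀ w ∈ W, (w, true) ∉ resReach G U W f := fun w hw hr => by
    obtain ⟨f', hf', hlt⟩ := exists_augment hf hw hr
    have := hmax (prune f') ⟨hf'.prune, acyclic_prune⟩
    have := Set.ncard_le_ncard (ends_subset_ends_prune (U := U) (T := W) (f := f'))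
      (Set.toFinite _)
    omega
  have hle := ncard_frontier_le hf hacyc
  have hends : ends U W f ⊆ W := fun _ hv => hv.1
  have hfr := hW _ (isSeparator_frontier hno)
    (hle.trans (Set.ncard_le_ncard hends (Set.toFinite _)))
  refine ⟨f, hf, hacyc, Set.eq_of_subset_of_ncard_le hends ?_ (Set.toFinite _),
    fun w hw => (hfr.symm ▸ hw : w ∈ frontier G U W f).1⟩
  rwa [hfr] at hle

def Avoids (H : SimpleGraph V) (S : Set V) (a b : V) : Prop := H.Adj a b ∧ b ∉ S

lemma notMem_reachSet_avoids (hS : IsSeparator H U W S) (hw : w ∈ W) :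
    w ∉ reachSet (Avoids H S) (U \ S) := by
  rintro ⟨u, ⟨hu, huS⟩, huw⟩
  obtain ⟨p, hp⟩ := SimpleGraph.exists_walk_of_reflTransGen (fun _ _ h => h.1) huw
  obtain ⟨x, hx, hxS⟩ := hS u hu w hw p
  rcases (hp x hx).1.cases_tail with rfl | ⟨c, -, -, hcx⟩
  exacts [huS hxS, hcx hxS]

lemma reflTransGen_avoids (hf : IsLinkage H U W f) (h : ReflTransGen (IsNext f) a b)
    (hS : ∀ x ∈ S, ReflTransGen (IsNext f) a x → ReflTransGen (IsNext f) x b → False) :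
    ReflTransGen (Avoids H S) a b :=
  h.of_forall_rel fun _ y hax hxy hyb => ⟨hf.adj hxy, fun hy => hS y hy (hax.tail hxy) hyb⟩

/-- The vertex `t` of `S` on the path through `x` and `y = f x` splits it: if `x` comes before `t`,
the path reaches `x` from `U` avoiding `S`; otherwise the path from `y` on would extend a walk
avoiding `S` to `W`. -/
lemma mem_reachSet_avoids_of_isNext [Finite V] (hf : IsLinkage H U W f) (hacyc : Acyclic f)
    (hends : ends U W f = W) (hS : IsSeparator H U W S)
    (hmeet : ∀ w ∈ W, ∃ t ∈ S, ReflTransGen (IsNext f) t w ∧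
      ∀ t' ∈ S, ReflTransGen (IsNext f) t' w → t' = t)
    (hxy : f x = some y) (hy : y ∈ reachSet (Avoids H S) (U \ S) ∨ y ∈ S) :
    x ∈ reachSet (Avoids H S) (U \ S) := by
  obtain ⟨w, hw, hyw⟩ := exists_mem_ends hf hacyc fun h => h.1 ⟨x, hxy⟩
  obtain ⟨s, hsU, hsw, hs⟩ := hf.exists_source hacyc hw
  rw [hends] at hw
  obtain ⟨t, htS, htw, huniq⟩ := hmeet w hw
  have hxw : ReflTransGen (IsNext f) x w := hyw.head hxy
  have hafter : ¬ ReflTransGen (IsNext f) t x := fun htx => by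
    have hty : TransGen (IsNext f) t y := TransGen.tail' htx hxy
    have hyS : y ∉ S := fun hyS => hacyc t (huniq y hyS hyw ▸ hty)
    have hyw' := reflTransGen_avoids hf hyw fun z hzS hyz hzw =>
      hacyc t (hty.trans_left (huniq z hzS hzw ▸ hyz))
    obtain ⟨u, hu, huy⟩ := hy.resolve_right hyS
    exact notMem_reachSet_avoids hS hw ⟨u, hu, huy.trans hyw'⟩
  rcases ReflTransGen.total_of_right_unique hf.rightUnique_swap (reflTransGen_swap.mpr hxw)
    (reflTransGen_swap.mpr htw) with h | h <;> rw [reflTransGen_swap] at h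
  · exact absurd h hafter
  rcases h.cases_head with rfl | ⟨c, hxc, hct⟩
  · exact absurd .refl hafter
  have hxt : TransGen (IsNext f) x t := TransGen.head' hxc hct
  have hsx := hf.reflTransGen_of_not_hasPrev hs hsw hxw
  have hnS : ∀ z ∈ S, ReflTransGen (IsNext f) s z → ReflTransGen (IsNext f) z x → False :=
    fun z hzS _ hzx => hacyc t (TransGen.trans_right (huniq z hzS (hzx.trans hxw) ▸ hzx) hxt)
  exact ⟨s, ⟨hsU, fun hsS => hnS s hsS .refl hsx⟩, reflTransGen_avoids hf hsx hnS⟩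

lemma mem_reachSet_avoids_of_mem_resReach [Finite V] (hf : IsLinkage H U W f)
    (hacyc : Acyclic f) (hends : ends U W f = W) (hS : IsSeparator H U W S)
    (hmeet : ∀ w ∈ W, ∃ t ∈ S, ReflTransGen (IsNext f) t w ∧
      ∀ t' ∈ S, ReflTransGen (IsNext f) t' w → t' = t)
    (hSW : ∀ t ∈ S, ∃ w ∈ W, ReflTransGen (IsNext f) t w)
    {z : V × Bool} (hz : z ∈ resReach H U W f) :
    z.1 ∈ reachSet (Avoids H S) (U \ S) ∨ z.2 = false ∧ z.1 ∈ S := by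
  have hfree : ∀ t ∈ S, ¬ Free U W f t := fun t htS =>
    let ⟨_, hw, htw⟩ := hSW t htS; not_free_of_reflTransGen htw (hends.symm ▸ hw)
  obtain ⟨_, ⟨u, hu, rfl⟩, hz⟩ := hz
  induction hz with
  | refl => exact (em (u ∈ S)).symm.imp (fun huS => subset_reachSet ⟨hu, huS⟩) (⟨rfl, ·⟩)
  | @tail a b _ hab ih =>
    rcases hab with hab | ⟨ha, hb, hadj⟩
    · cases hab with
      | enter hv => exact Or.inl (ih.resolve_right fun h => hfree _ h.2 hv)
      | leave v => exact Or.inl (ih.resolve_right fun h => Bool.noConfusion h.1)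
      | back hxy => exact Or.inl (mem_reachSet_avoids_of_isNext hf hacyc hends hS hmeet hxy
          (ih.imp_right And.right))
    · obtain ⟨a, _⟩ := a
      obtain ⟨b, _⟩ := b
      subst ha hb
      have ha := ih.resolve_right fun h => Bool.noConfusion h.1
      by_cases hbS : b ∈ S
      exacts [Or.inr ⟨rfl, hbS⟩, Or.inl (mem_reachSet_of_rel ha ⟨hadj, hbS⟩)]

theorem isUniqueMinSeparator_of_linkage [Finite V] (hf : IsLinkage H U W f) (hacyc : Acyclic f)
    (hends : ends U W f = W) (hreach : ∀ w ∈ W, (w, false) ∈ resReach H U W f) :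
    IsUniqueMinSeparator H U W := by
  intro S hS hcard
  have hWends : ∀ w ∈ W, w ∈ ends U W f := fun w hw => hends.symm ▸ hw
  have hmeet : ∀ w ∈ W, ∃ t ∈ S, ReflTransGen (IsNext f) t w := fun w hw => by
    obtain ⟨s, hsU, hsw, -⟩ := hf.exists_source hacyc (hWends w hw)
    obtain ⟨p, hp⟩ := SimpleGraph.exists_walk_of_reflTransGen hf.adj hsw
    obtain ⟨t, ht, htS⟩ := hS s hsU w hw p
    exact ⟨t, htS, (hp t ht).2⟩
  choose! h hhS hhw using hmeet
  have hinj : Set.InjOn h W := fun w hw w' hw' hww' =>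
    eq_of_reflTransGen_of_mem_ends (hhw w hw) (hww' ▸ hhw w' hw') (hWends w hw) (hWends w' hw')
  have hSeq : h '' W = S := Set.eq_of_subset_of_ncard_le (Set.image_subset_iff.mpr hhS)
    (by rwa [hinj.ncard_image]) (Set.toFinite _)
  have huniq : ∀ w ∈ W, ∀ t ∈ S, ReflTransGen (IsNext f) t w → t = h w := by
    intro w hw t ht htw
    rw [← hSeq] at ht
    obtain ⟨w', hw', rfl⟩ := ht
    rw [eq_of_reflTransGen_of_mem_ends (hhw w' hw') htw (hWends w' hw') (hWends w hw)]
  have hSW : ∀ t ∈ S, ∃ w ∈ W, ReflTransGen (IsNext f) t w := by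
    rw [← hSeq]
    rintro _ ⟨w, hw, rfl⟩
    exact ⟨w, hw, hhw w hw⟩
  have hWS : W ⊆ S := fun w hw =>
    ((mem_reachSet_avoids_of_mem_resReach hf hacyc hends hS
      (fun w hw => ⟨h w, hhS w hw, hhw w hw, huniq w hw⟩) hSW (hreach w hw)).resolve_left
      (notMem_reachSet_avoids hS hw)).2
  exact (Set.eq_of_subset_of_ncard_le hWS hcard (Set.toFinite _)).symm

lemma mem_reachSet_adj_of_mem_resReach (hf : IsLinkage H U T f) {z : V × Bool}
    (hz : z ∈ resReach H U W f) : z.1 ∈ reachSet H.Adj U := by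
  obtain ⟨_, ⟨u, hu, rfl⟩, hz⟩ := hz
  induction hz with
  | refl => exact subset_reachSet hu
  | tail _ hab ih =>
    rcases hab with hab | ⟨-, -, hadj⟩
    · cases hab with
      | enter => exact ih
      | leave => exact ih
      | back hxy => exact mem_reachSet_of_rel ih (hf.adj hxy).symm
    · exact mem_reachSet_of_rel ih hadj

def flowEdges (f : V → Option V) : Set (Sym2 V) := {e | ∃ x y, f x = some y ∧ e = s(x, y)}

lemma ncard_flowEdges_le [Finite V] : (flowEdges f).ncard ≤ Nat.card V := by
  have : flowEdges f ⊆ (fun x => s(x, (f x).getD x)) '' Set.univ := by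
    rintro _ ⟨x, y, hxy, rfl⟩
    exact ⟨x, trivial, by simp [hxy]⟩
  exact (Set.ncard_le_ncard this (Set.toFinite _)).trans
    ((Set.ncard_image_le (Set.toFinite _)).trans (Set.ncard_univ V).le)

theorem exists_sparse_isUniqueMinSeparator [Finite V] (hW : IsUniqueMinSeparator G U W) :
    ∃ H ≤ G, IsUniqueMinSeparator H U W ∧
      H.edgeSet.ncard ≤ Nat.card V + (reachSet H.Adj U).ncard := by
  obtain ⟨f, hf, hacyc, hends, hreach⟩ := exists_linkage_of_isUniqueMinSeparator hW
  obtain ⟨par, hpar, hspan⟩ :=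
    exists_parent_forest (FlowArc U W f) (EdgeArc G) ((·, false) '' U)
  set tree : Set (Sym2 V) := {e | ∃ a b, par b = some a ∧ e = s(a.1, b.1)}
  set H := SimpleGraph.fromEdgeSet (flowEdges f ∪ tree)
  have hfH : IsLinkage H U W f := ⟨fun x y h => (SimpleGraph.fromEdgeSet_adj _).mpr
    ⟨Or.inl ⟨x, y, h, rfl⟩, (hf.adj h).ne⟩, hf.inj, hf.source_mem, hf.sink_mem⟩
  have hreachH : resReach G U W f ⊆ resReach H U W f := hspan.trans <| reachSet_mono <|
    sup_le_sup_left (fun a b h => have h' := (hpar a b h).1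
      ⟨h'.1, h'.2.1,
        (SimpleGraph.fromEdgeSet_adj _).mpr ⟨Or.inr ⟨a, b, h, rfl⟩, h'.2.2.ne⟩⟩) _
  refine ⟨H, fun v w hvw => ?_, isUniqueMinSeparator_of_linkage hfH hacyc hends
    fun w hw => hreachH (hreach w hw), ?_⟩
  · obtain ⟨⟨x, y, hxy, he⟩ | ⟨a, b, hab, he⟩, -⟩ :=
      (SimpleGraph.fromEdgeSet_adj _).mp hvw
    · rw [← SimpleGraph.mem_edgeSet, he]; exact hf.adj hxy
    · rw [← SimpleGraph.mem_edgeSet, he]; exact (hpar a b hab).1.2.2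
  have htree : tree ⊆ (fun v => s(((par (v, false)).getD (v, false)).1, v)) ''
      {v | par (v, false) ≠ none} := by
    rintro _ ⟨a, ⟨v, b⟩, hab, rfl⟩
    obtain rfl : b = false := (hpar a _ hab).1.2.1
    exact ⟨v, by simp [hab], by simp [hab]⟩
  have hdom : {v | par (v, false) ≠ none} ⊆ reachSet H.Adj U := fun v hv => by
    obtain ⟨a, ha⟩ := Option.ne_none_iff_exists'.mp hv
    exact mem_reachSet_adj_of_mem_resReach hfH (hreachH (hpar a _ ha).2.1)
  calc H.edgeSet.ncard ≤ (flowEdges f ∪ tree).ncard :=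
        Set.ncard_le_ncard (by rw [SimpleGraph.edgeSet_fromEdgeSet]; exact Set.sdiff_subset)
          (Set.toFinite _)
    _ ≤ (flowEdges f).ncard + tree.ncard := Set.ncard_union_le _ _
    _ ≤ Nat.card V + (reachSet H.Adj U).ncard := add_le_add ncard_flowEdges_le <|
        (Set.ncard_le_ncard htree (Set.toFinite _)).trans <|
        (Set.ncard_image_le (Set.toFinite _)).trans (Set.ncard_le_ncard hdom (Set.toFinite _))

end Menger

theorem IsLeftShape.exists_sparse {V : Type*} [Finite V] {G : SimpleGraph V} {U W : Set V}
    (h : IsLeftShape G U W) :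
    ∃ H ≤ G, H.edgeSet.ncard ≤ 2 * Nat.card V ∧ IsLeftShape H U W := by
  rw [isLeftShape_iff] at h
  obtain ⟨H₁, hle₁, hH₁, hcard₁⟩ := Menger.exists_sparse_isUniqueMinSeparator h.1
  obtain ⟨H, hH₁H, hle, hcard, hconn⟩ := SimpleGraph.exists_connecting_supergraph hle₁ h.2
  refine ⟨H, hle, ?_, isLeftShape_iff.mpr ⟨hH₁.mono hH₁H, hconn⟩⟩
  have := Set.ncard_add_ncard_compl (reachSet H₁.Adj U)
  omega

theorem stmt19 {V : Type*} [Fintype V] (γ : SimpleGraph V) (U W : Set V)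
    (hleft : IsLeftShape γ U W) :
    ∃ Res : Set (Sym2 V), Res ⊆ γ.edgeSet ∧ Res.ncard ≤ 2 * Nat.card V ∧
      ∀ F : Set (Sym2 V), F ⊆ γ.edgeSet \ Res →
        IsLeftShape (γ.deleteEdges F) U W := by
  obtain ⟨H, hle, hcard, hH⟩ := hleft.exists_sparse
  refine ⟨H.edgeSet, SimpleGraph.edgeSet_subset_edgeSet.mpr hle, hcard, fun F hF => hH.mono ?_⟩
  intro v w hvw
  exact SimpleGraph.deleteEdges_adj.mpr ⟨hle hvw, fun h => (hF h).2 hvw⟩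
end
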